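/- arXiv:2105.14315 — 10 statements merged into one kernel-verified Lean document; each statement's English description precedes it below -/
import Mathlib

section
/- If a polynomial p in ℝ[x_1,...,x_n] is written as a sum of squares p = q_1^2 + ... + q_k^2, then for each i the Newton polytope of q_i is contained in (1/2)·N_p, where N_p is the Newton polytope of p. Concretely: the convex hull in ℝ^n of the exponent vectors of monomials appearing in q_i is contained in the set (1/2)·(convex hull of the exponent vectors of monomials appearing in p). -/
/-!
Let `A` be the set of exponent vectors of all the `qᵢ`. At a vertex `a` of `conv A`, the only way
to write `2a` as a sum of two points of `A` is `a + a`, so the coefficient of `x^{2a}` in `p` is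
`∑ᵢ (coeff a qᵢ)²`, which is positive. Hence every vertex of `conv A` lies in `(1/2) • N_p`, and so
does `conv A ⊇ N_{qᵢ}`.
-/

open MvPolynomial Pointwise

/-- The Newton polytope of a polynomial: the convex hull in `ℝⁿ` of the exponent
vectors of the monomials occurring in `p` with nonzero coefficient. -/
noncomputable def newtonPolytope {n : ℕ} (p : MvPolynomial (Fin n) ℝ) : Set (Fin n → ℝ) :=
  convexHull ℝ ((fun α : Fin n →₀ ℕ => fun j => (α j : ℝ)) '' (p.support : Set (Fin n →₀ ℕ)))

theorem eq_of_add_eq_add_self_of_mem_extremePoints {𝕜 E : Type*} [Ring 𝕜] [LinearOrder 𝕜]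
    [IsStrictOrderedRing 𝕜] [Invertible (2 : 𝕜)] [AddCommGroup E] [Module 𝕜 E] {A : Set E}
    {x y z : E} (hx : x ∈ A.extremePoints 𝕜) (hy : y ∈ A) (hz : z ∈ A) (h : y + z = x + x) :
    y = x ∧ z = x := by
  have hmid : midpoint 𝕜 y z = x := by
    rw [midpoint_eq_smul_add, h, ← two_smul 𝕜 x, smul_smul, invOf_mul_self, one_smul]
  exact (mem_extremePoints.1 hx).2 y hy z hz (hmid ▸ midpoint_mem_openSegment y z)

theorem Set.Finite.convexHull_subset_of_extremePoints_subset {E : Type*} [AddCommGroup E]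
    [Module ℝ E] [TopologicalSpace E] [T2Space E] [IsTopologicalAddGroup E] [ContinuousSMul ℝ E]
    [LocallyConvexSpace ℝ E] {s K : Set E} (hs : s.Finite) (hK : Convex ℝ K)
    (h : (convexHull ℝ s).extremePoints ℝ ⊆ K) : convexHull ℝ s ⊆ K := by
  have hext : (convexHull ℝ s).extremePoints ℝ ⊆ s := extremePoints_convexHull_subset
  have hKM := closure_convexHull_extremePoints (hs.isCompact_convexHull ℝ) (convex_convexHull ℝ s)
  rw [((hs.subset hext).isClosed_convexHull ℝ).closure_eq] at hKM
  exact hKM ▸ convexHull_min h hK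

namespace MvPolynomial

variable {σ R : Type*}

theorem coeff_add_self_mul_self [CommSemiring R] {q : MvPolynomial σ R} {a : σ →₀ ℕ}
    (h : ∀ b ∈ q.support, ∀ c ∈ q.support, b + c = a + a → b = a) :
    coeff (a + a) (q * q) = coeff a q * coeff a q := by
  classical
  rw [coeff_mul, Finset.sum_eq_single (a, a)]
  · rintro ⟨b, c⟩ hbc hne
    simp only [Finset.HasAntidiagonal.mem_antidiagonal] at hbc
    by_contra hterm
    have hb : b ∈ q.support := mem_support_iff.2 (left_ne_zero_of_mul hterm)
    have hc : c ∈ q.support := mem_support_iff.2 (right_ne_zero_of_mul hterm)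
    obtain rfl := h b hb c hc hbc
    exact hne (by rw [add_left_cancel hbc])
  · simp

theorem add_self_mem_support_sum_sq [CommRing R] [LinearOrder R] [IsStrictOrderedRing R]
    {ι : Type*} [Fintype ι] (q : ι → MvPolynomial σ R) {a : σ →₀ ℕ}
    (h : ∀ i, ∀ b ∈ (q i).support, ∀ c ∈ (q i).support, b + c = a + a → b = a)
    (ha : ∃ i, a ∈ (q i).support) : a + a ∈ (∑ i, q i ^ 2).support := by
  obtain ⟨i₀, hi₀⟩ := ha
  have hcoeff : coeff (a + a) (∑ i, q i ^ 2) = ∑ i, coeff a (q i) ^ 2 := by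
    simp only [coeff_sum, sq, coeff_add_self_mul_self (h _)]
  refine mem_support_iff.2 (hcoeff ▸ (Finset.sum_pos' (fun i _ => sq_nonneg _) ?_).ne')
  exact ⟨i₀, Finset.mem_univ _, sq_pos_of_ne_zero (mem_support_iff.1 hi₀)⟩

end MvPolynomial

section ExponentVector

variable {σ : Type*}

def exponentVector (a : σ →₀ ℕ) : σ → ℝ := fun j => (a j : ℝ)

theorem exponentVector_add (a b : σ →₀ ℕ) :
    exponentVector (a + b) = exponentVector a + exponentVector b := by
  ext j
  simp [exponentVector]

theorem exponentVector_injective : Function.Injective (exponentVector (σ := σ)) :=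
  fun a b h => Finsupp.ext fun j => by simpa [exponentVector] using congrFun h j

theorem eq_of_add_eq_add_self_of_exponentVector_mem_extremePoints {S : Set (σ →₀ ℕ)}
    {a b c : σ →₀ ℕ} (ha : exponentVector a ∈ (convexHull ℝ (exponentVector '' S)).extremePoints ℝ)
    (hb : b ∈ S) (hc : c ∈ S) (h : b + c = a + a) : b = a := by
  have hmem : ∀ d ∈ S, exponentVector d ∈ convexHull ℝ (exponentVector '' S) :=
    fun d hd => subset_convexHull ℝ _ ⟨d, hd, rfl⟩
  refine exponentVector_injective
    (eq_of_add_eq_add_self_of_mem_extremePoints ha (hmem b hb) (hmem c hc) ?_).1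
  rw [← exponentVector_add, ← exponentVector_add, h]

end ExponentVector

/-- If `p = q₁² + ⋯ + q_k²` is a sum of squares, then the Newton polytope of each `qᵢ`
is contained in `(1/2) • N_p`. -/
theorem newtonPolytope_of_sum_of_squares {n k : ℕ} (p : MvPolynomial (Fin n) ℝ)
    (q : Fin k → MvPolynomial (Fin n) ℝ) (hp : p = ∑ i, (q i) ^ 2) :
    ∀ i : Fin k, newtonPolytope (q i) ⊆ (1 / 2 : ℝ) • newtonPolytope p := by
  intro i
  set S : Set (Fin n →₀ ℕ) := ⋃ j, ((q j).support : Set (Fin n →₀ ℕ))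
  have hfin : (exponentVector '' S).Finite :=
    (Set.finite_iUnion fun j => (q j).support.finite_toSet).image _
  have hsub : newtonPolytope (q i) ⊆ convexHull ℝ (exponentVector '' S) :=
    convexHull_mono (Set.image_mono (Set.subset_iUnion (fun j => ((q j).support : Set (Fin n →₀ ℕ))) i))
  refine hsub.trans (hfin.convexHull_subset_of_extremePoints_subset
    ((convex_convexHull ℝ _).smul _) fun x hx => ?_)
  obtain ⟨a, haS, rfl⟩ := extremePoints_convexHull_subset hx
  have hdouble : a + a ∈ p.support := hp ▸ add_self_mem_support_sum_sq q
    (fun j b hb c hc => eq_of_add_eq_add_self_of_exponentVector_mem_extremePoints hx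
      (Set.mem_iUnion_of_mem j hb) (Set.mem_iUnion_of_mem j hc))
    (Set.mem_iUnion.1 haS)
  refine ⟨exponentVector (a + a), subset_convexHull ℝ _ ⟨a + a, hdouble, rfl⟩, ?_⟩
  change (1 / 2 : ℝ) • exponentVector (a + a) = exponentVector a
  rw [exponentVector_add, ← two_smul ℝ, smul_smul]
  norm_num
end

section
/- The Choi–Lam–Reznick form S(x,y,z) = x^4*y^2 + y^4*z^2 + z^4*x^2 - 3*x^2*y^2*z^2 is nonnegative on ℝ^3 (i.e., S(x,y,z) >= 0 for all real x, y, z), but S is not a sum of squares of polynomials in ℝ[x,y,z]. -/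
/-!
Nonnegativity is AM-GM for the three terms `x⁴y², y⁴z², z⁴x²`.

Suppose `S = ∑ qᵢ²`. If `e + e` splits in only one way as a sum of two exponents occurring in
the `qᵢ`, the coefficient of `e + e` in `∑ qᵢ²` is `∑ (coeff e qᵢ)² ≥ 0`, and it vanishes only
if every `coeff e qᵢ` does. Applied to the deg-lex largest exponent this bounds `deg qᵢ ≤ 3`.
Since `S` contains no `x⁶, y⁶, z⁶`, the monomials `x³, y³, z³` drop out of every `qᵢ`; then, as
`S` contains no `x⁴z², x²y⁴, y²z⁴`, so do `x²z, xy², yz²`. Among the remaining cubic monomials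
`x²y, y²z, z²x, xyz`, the only product giving `x²y²z²` is `xyz · xyz`, so its coefficient in
`∑ qᵢ²` is a sum of squares, whereas in `S` it is `-3`.
-/

open MvPolynomial
open scoped MonomialOrder

instance UniqueAdd.instDecidable {G : Type*} [Add G] [DecidableEq G] (A B : Finset G) (a₀ b₀ : G) :
    Decidable (UniqueAdd A B a₀ b₀) :=
  decidable_of_iff (∀ a ∈ A, ∀ b ∈ B, a + b = a₀ + b₀ → a = a₀ ∧ b = b₀)
    ⟨fun h _ _ ha hb => h _ ha _ hb, fun h _ ha _ hb => h ha hb⟩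

theorem UniqueAdd.of_mapsTo_addEquiv {G M : Type*} [Add G] [Add M] (f : G ≃+ M)
    {A B : Finset G} {S T : Finset M} {a₀ b₀ : M} (hA : Set.MapsTo f A S) (hB : Set.MapsTo f B T)
    (h : UniqueAdd S T a₀ b₀) : UniqueAdd A B (f.symm a₀) (f.symm b₀) := by
  intro a b ha hb hab
  simp only [← f.apply_eq_iff_eq, map_add, AddEquiv.apply_symm_apply] at hab ⊢
  exact h (hA ha) (hB hb) hab

namespace MvPolynomial

variable {σ ι R : Type*}

theorem coeff_add_self_sq [CommSemiring R] {p : MvPolynomial σ R} {e : σ →₀ ℕ}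
    (h : UniqueAdd p.support p.support e e) : coeff (e + e) (p ^ 2) = coeff e p ^ 2 := by
  rw [sq, sq]
  exact AddMonoidAlgebra.coeff_mul_add_of_uniqueAdd h

theorem coeff_add_self_sum_sq [CommSemiring R] {s : Finset ι} {q : ι → MvPolynomial σ R}
    {e : σ →₀ ℕ} (h : ∀ i ∈ s, UniqueAdd (q i).support (q i).support e e) :
    coeff (e + e) (∑ i ∈ s, q i ^ 2) = ∑ i ∈ s, coeff e (q i) ^ 2 := by
  rw [coeff_sum]
  exact Finset.sum_congr rfl fun i hi => coeff_add_self_sq (h i hi)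

variable [CommRing R] [LinearOrder R] [IsStrictOrderedRing R]

theorem coeff_eq_zero_of_coeff_add_self_sum_sq_nonpos {s : Finset ι}
    {q : ι → MvPolynomial σ R} {e : σ →₀ ℕ}
    (h : ∀ i ∈ s, UniqueAdd (q i).support (q i).support e e)
    (hle : coeff (e + e) (∑ i ∈ s, q i ^ 2) ≤ 0) : ∀ i ∈ s, coeff e (q i) = 0 := by
  rw [coeff_add_self_sum_sq h] at hle
  intro i hi
  exact pow_eq_zero_iff two_ne_zero |>.mp <|
    (Finset.sum_eq_zero_iff_of_nonneg fun j _ => sq_nonneg _).mp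
      (hle.antisymm (Finset.sum_nonneg fun j _ => sq_nonneg _)) i hi

theorem zero_le_coeff_sum_sq_of_mapsTo {M : Type*} [AddCommMonoid M] (f : (σ →₀ ℕ) ≃+ M) (t : M)
    {s : Finset ι} {q : ι → MvPolynomial σ R} {S : Finset M}
    (hS : ∀ i ∈ s, Set.MapsTo f (q i).support S) (ht : UniqueAdd S S t t) :
    0 ≤ coeff (f.symm (t + t)) (∑ i ∈ s, q i ^ 2) := by
  rw [map_add, coeff_add_self_sum_sq fun i hi => .of_mapsTo_addEquiv f (hS i hi) (hS i hi) ht]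
  exact Finset.sum_nonneg fun i _ => sq_nonneg _

theorem mapsTo_erase_of_coeff_sum_sq_eq_zero {M : Type*} [AddCommMonoid M] [DecidableEq M]
    (f : (σ →₀ ℕ) ≃+ M) (t : M) {s : Finset ι} {q : ι → MvPolynomial σ R} {S : Finset M}
    (hS : ∀ i ∈ s, Set.MapsTo f (q i).support S) (ht : UniqueAdd S S t t)
    (hcoeff : coeff (f.symm (t + t)) (∑ i ∈ s, q i ^ 2) = 0) :
    ∀ i ∈ s, Set.MapsTo f (q i).support (S.erase t) := by
  rw [map_add] at hcoeff
  have hzero := coeff_eq_zero_of_coeff_add_self_sum_sq_nonpos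
    (fun i hi => UniqueAdd.of_mapsTo_addEquiv f (hS i hi) (hS i hi) ht) hcoeff.le
  intro i hi d hd
  refine Finset.mem_erase.mpr ⟨fun hdt => mem_support_iff.mp hd ?_, hS i hi hd⟩
  rw [← hzero i hi, ← hdt, AddEquiv.symm_apply_apply]

end MvPolynomial

namespace MonomialOrder

variable {σ ι R : Type*} [CommRing R] [LinearOrder R] [IsStrictOrderedRing R]

theorem degree_add_self_le_degree_sum_sq (m : MonomialOrder σ) {s : Finset ι}
    (q : ι → MvPolynomial σ R) {i : ι} (hi : i ∈ s) :
    m.degree (q i) + m.degree (q i) ≼[m] m.degree (∑ j ∈ s, q j ^ 2) := by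
  obtain ⟨j, hj, hmax⟩ := s.exists_max_image (fun j => m.toSyn (m.degree (q j))) ⟨i, hi⟩
  set e := m.degree (q j)
  have hle : m.degree (q i) + m.degree (q i) ≼[m] e + e := by
    rw [map_add, map_add]
    exact add_le_add (hmax i hi) (hmax i hi)
  refine hle.trans ?_
  by_cases hqj : q j = 0
  · simp only [e, hqj, m.degree_zero, add_zero, map_zero]
    exact m.zero_le _
  -- `e` is the largest exponent occurring in any `q k`, so `e + e` only splits as `e + e`.
  have huniq : ∀ k ∈ s, UniqueAdd (q k).support (q k).support e e := by
    intro k hk a b ha hb hab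
    have ha' := (m.le_degree ha).trans (hmax k hk)
    have hb' := (m.le_degree hb).trans (hmax k hk)
    obtain rfl : a = e := by
      by_contra hne
      have hlt := add_lt_add_of_lt_of_le (lt_of_le_of_ne ha' (m.toSyn.injective.ne hne)) hb'
      rw [← map_add, ← map_add, hab] at hlt
      exact lt_irrefl _ hlt
    exact ⟨rfl, add_left_cancel hab⟩
  apply m.le_degree
  rw [mem_support_iff, coeff_add_self_sum_sq huniq]
  refine (lt_of_lt_of_le ?_ (Finset.single_le_sum (fun k _ => sq_nonneg (coeff e (q k))) hj)).ne'
  exact sq_pos_of_ne_zero (m.coeff_degree_ne_zero_iff.mpr hqj)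

end MonomialOrder

theorem MvPolynomial.two_mul_totalDegree_le_totalDegree_sum_sq {σ ι R : Type*} [CommRing R]
    [LinearOrder R] [IsStrictOrderedRing R] [LinearOrder σ] [WellFoundedGT σ] {s : Finset ι}
    (q : ι → MvPolynomial σ R) {i : ι} (hi : i ∈ s) :
    2 * (q i).totalDegree ≤ (∑ j ∈ s, q j ^ 2).totalDegree := by
  rw [← degree_degLexDegree, ← degree_degLexDegree, two_mul, ← map_add]
  exact Finsupp.DegLex.monotone_degree
    (MonomialOrder.degLex.degree_add_self_le_degree_sum_sq q hi)

theorem three_mul_mul_le_sq_mul_add_sq_mul_add_sq_mul {R : Type*} [CommRing R] [LinearOrder R]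
    [IsStrictOrderedRing R] {a b c : R} (ha : 0 ≤ a) (hb : 0 ≤ b) (hc : 0 ≤ c) :
    3 * a * b * c ≤ a ^ 2 * b + b ^ 2 * c + c ^ 2 * a := by
  nlinarith [mul_nonneg ha (sq_nonneg (b - c)), mul_nonneg hb (sq_nonneg (c - a)),
    mul_nonneg hc (sq_nonneg (a - b)), mul_nonneg ha (sq_nonneg (a - b)),
    mul_nonneg hb (sq_nonneg (b - c)), mul_nonneg hc (sq_nonneg (c - a))]

namespace ChoiLamReznick

open Finsupp

-- Exponents as triples, so that the splitting conditions `UniqueAdd S S t t` can be `decide`d.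
@[simps]
noncomputable def exponentEquiv : (Fin 3 →₀ ℕ) ≃+ ℕ × ℕ × ℕ where
  toFun d := (d 0, d 1, d 2)
  invFun t := single 0 t.1 + single 1 t.2.1 + single 2 t.2.2
  left_inv d := by ext i; fin_cases i <;> simp
  right_inv t := by simp
  map_add' _ _ := rfl

lemma monomial_exponentEquiv_symm (a b c : ℕ) (r : ℝ) :
    monomial (exponentEquiv.symm (a, b, c)) r = C r * X 0 ^ a * X 1 ^ b * X 2 ^ c := by
  simp only [exponentEquiv_symm_apply, X_pow_eq_monomial, C_mul_monomial, monomial_mul, mul_one]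

noncomputable def form : MvPolynomial (Fin 3) ℝ :=
  X 0 ^ 4 * X 1 ^ 2 + X 1 ^ 4 * X 2 ^ 2 + X 2 ^ 4 * X 0 ^ 2 - 3 * X 0 ^ 2 * X 1 ^ 2 * X 2 ^ 2

lemma form_eq_sum_monomial : form = monomial (exponentEquiv.symm (4, 2, 0)) 1
    + monomial (exponentEquiv.symm (0, 4, 2)) 1 + monomial (exponentEquiv.symm (2, 0, 4)) 1
    - monomial (exponentEquiv.symm (2, 2, 2)) 3 := by
  simp only [monomial_exponentEquiv_symm, form, C_1, map_ofNat]
  ring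

lemma coeff_form (t : ℕ × ℕ × ℕ) : coeff (exponentEquiv.symm t) form =
    (if t = (4, 2, 0) then 1 else 0) + (if t = (0, 4, 2) then 1 else 0)
      + (if t = (2, 0, 4) then 1 else 0) - if t = (2, 2, 2) then 3 else 0 := by
  simp only [form_eq_sum_monomial, coeff_add, coeff_sub, coeff_monomial,
    EmbeddingLike.apply_eq_iff_eq, eq_comm]

lemma totalDegree_form_le : form.totalDegree ≤ 6 := by
  rw [form_eq_sum_monomial]
  refine (((isHomogeneous_monomial _ ?_).add (isHomogeneous_monomial _ ?_)).add
    (isHomogeneous_monomial _ ?_) |>.sub (isHomogeneous_monomial _ ?_)).totalDegree_le <;> simp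

lemma eval_form_nonneg (v : Fin 3 → ℝ) : 0 ≤ eval v form := by
  have := three_mul_mul_le_sq_mul_add_sq_mul_add_sq_mul
    (sq_nonneg (v 0)) (sq_nonneg (v 1)) (sq_nonneg (v 2))
  simp only [form, map_add, map_sub, map_mul, map_pow, eval_X, map_ofNat]
  linarith

def cubicExponents : Finset (ℕ × ℕ × ℕ) :=
  (Finset.range 4 ×ˢ Finset.range 4 ×ˢ Finset.range 4).filter fun t => t.1 + t.2.1 + t.2.2 ≤ 3

lemma exponentEquiv_mem_cubicExponents {d : Fin 3 →₀ ℕ} (hd : d.degree ≤ 3) :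
    exponentEquiv d ∈ cubicExponents := by
  rw [degree_eq_sum, Fin.sum_univ_three] at hd
  simp only [cubicExponents, Finset.mem_filter, Finset.mem_product, Finset.mem_range,
    exponentEquiv_apply]
  omega

lemma form_ne_sum_sq {ι : Type*} (s : Finset ι) (q : ι → MvPolynomial (Fin 3) ℝ) :
    form ≠ ∑ i ∈ s, q i ^ 2 := by
  intro hq
  have hcubic : ∀ i ∈ s, Set.MapsTo exponentEquiv (q i).support cubicExponents := by
    intro i hi d hd
    have hdeg : d.degree ≤ (q i).totalDegree := le_totalDegree hd
    have hsq := two_mul_totalDegree_le_totalDegree_sum_sq q hi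
    have h6 : (∑ j ∈ s, q j ^ 2).totalDegree ≤ 6 := hq ▸ totalDegree_form_le
    exact exponentEquiv_mem_cubicExponents (by omega)
  have hx3 := mapsTo_erase_of_coeff_sum_sq_eq_zero exponentEquiv (3, 0, 0) hcubic (by decide)
    (by rw [← hq, coeff_form]; norm_num)
  have hy3 := mapsTo_erase_of_coeff_sum_sq_eq_zero exponentEquiv (0, 3, 0) hx3 (by decide)
    (by rw [← hq, coeff_form]; norm_num)
  have hz3 := mapsTo_erase_of_coeff_sum_sq_eq_zero exponentEquiv (0, 0, 3) hy3 (by decide)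
    (by rw [← hq, coeff_form]; norm_num)
  have hx2z := mapsTo_erase_of_coeff_sum_sq_eq_zero exponentEquiv (2, 0, 1) hz3 (by decide)
    (by rw [← hq, coeff_form]; norm_num)
  have hxy2 := mapsTo_erase_of_coeff_sum_sq_eq_zero exponentEquiv (1, 2, 0) hx2z (by decide)
    (by rw [← hq, coeff_form]; norm_num)
  have hyz2 := mapsTo_erase_of_coeff_sum_sq_eq_zero exponentEquiv (0, 1, 2) hxy2 (by decide)
    (by rw [← hq, coeff_form]; norm_num)
  have hxyz := zero_le_coeff_sum_sq_of_mapsTo exponentEquiv (1, 1, 1) hyz2 (by decide)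
  rw [← hq, coeff_form] at hxyz
  norm_num at hxyz

end ChoiLamReznick

/-- The Choi–Lam–Reznick form `S(x,y,z) = x⁴y² + y⁴z² + z⁴x² - 3x²y²z²` is nonnegative
on `ℝ³` but is not a sum of squares of polynomials. -/
theorem choi_lam_reznick_nonneg_not_sos :
    (∀ v : Fin 3 → ℝ, 0 ≤ eval v ((X 0) ^ 4 * (X 1) ^ 2 + (X 1) ^ 4 * (X 2) ^ 2
        + (X 2) ^ 4 * (X 0) ^ 2 - 3 * (X 0) ^ 2 * (X 1) ^ 2 * (X 2) ^ 2 :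
        MvPolynomial (Fin 3) ℝ)) ∧
    ¬ ∃ (k : ℕ) (q : Fin k → MvPolynomial (Fin 3) ℝ),
      (X 0) ^ 4 * (X 1) ^ 2 + (X 1) ^ 4 * (X 2) ^ 2 + (X 2) ^ 4 * (X 0) ^ 2
        - 3 * (X 0) ^ 2 * (X 1) ^ 2 * (X 2) ^ 2 = ∑ i, (q i) ^ 2 :=
  ⟨ChoiLamReznick.eval_form_nonneg,
    fun ⟨_, q, hq⟩ => ChoiLamReznick.form_ne_sum_sq Finset.univ q hq⟩
end

section
/- Let f be a polynomial in ℝ[x_1,...,x_n]. If x_1^2 · f is a sum of squares of polynomials, then f itself is a sum of squares of polynomials. -/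
open MvPolynomial

/-- If `x₁² · f` is a sum of squares of polynomials, then so is `f`. -/
theorem sos_of_x_sq_mul_sos {n : ℕ} (f : MvPolynomial (Fin (n + 1)) ℝ)
    (h : ∃ (k : ℕ) (q : Fin k → MvPolynomial (Fin (n + 1)) ℝ),
      (X 0) ^ 2 * f = ∑ i, (q i) ^ 2) :
    ∃ (k : ℕ) (q : Fin k → MvPolynomial (Fin (n + 1)) ℝ), f = ∑ i, (q i) ^ 2 := by
  obtain ⟨k, q, h⟩ := h
  set e := MvPolynomial.finSuccEquiv ℝ n with he_def
  have he : (Polynomial.X) ^ 2 * e f = ∑ i, (e (q i)) ^ 2 := by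
    have := congrArg e h
    simpa [he_def, map_sum, map_mul, map_pow, MvPolynomial.finSuccEquiv_X_zero] using this
  -- coefficient 0
  have hsum : ∑ i, ((e (q i)).coeff 0) ^ 2 = 0 := by
    have := congrArg (fun p => Polynomial.coeff p 0) he
    simpa [Polynomial.finset_sum_coeff, Polynomial.mul_coeff_zero, pow_two] using this.symm
  have hc0 : ∀ i, (e (q i)).coeff 0 = 0 := by
    intro i
    apply MvPolynomial.funext
    intro a
    have hsum' : ∑ j, (MvPolynomial.eval a ((e (q j)).coeff 0)) ^ 2 = 0 := by
      have := congrArg (MvPolynomial.eval a) hsum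
      simpa [map_sum, map_pow] using this
    have := (Finset.sum_eq_zero_iff_of_nonneg (fun j _ => sq_nonneg _)).mp hsum' i
      (Finset.mem_univ i)
    have := pow_eq_zero_iff (n := 2) (by norm_num) |>.mp this
    simpa using this
  have hdvd : ∀ i, ∃ r, e (q i) = Polynomial.X * r := by
    intro i
    exact Polynomial.X_dvd_iff.mpr (hc0 i)
  choose r hr using hdvd
  have key : (Polynomial.X : Polynomial (MvPolynomial (Fin n) ℝ)) ^ 2 * e f
      = Polynomial.X ^ 2 * ∑ i, (r i) ^ 2 := by
    rw [he, Finset.mul_sum]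
    refine Finset.sum_congr rfl fun i _ => ?_
    rw [hr i]; ring
  have hef : e f = ∑ i, (r i) ^ 2 :=
    mul_left_cancel₀ (pow_ne_zero 2 Polynomial.X_ne_zero) key
  refine ⟨k, fun i => e.symm (r i), ?_⟩
  have := congrArg e.symm hef
  simpa [map_sum, map_pow] using this
end

section
/- Gram matrix correspondence for univariate polynomials: let p in ℝ[x] have degree at most 2d. Then p is a sum of squares of polynomials if and only if there exists a positive semidefinite real (d+1)×(d+1) matrix A = (a_{ij})_{0<=i,j<=d} such that for every k with 0 <= k <= 2d, the coefficient of x^k in p equals the antidiagonal sum Σ_{i+j=k} a_{ij}. Moreover, p is a sum of at most r squares if and only if such a matrix A can be chosen with rank at most r. -/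
/-!
Writing `m(x) = (1, x, …, x^d)`, every `(d+1) × (d+1)` matrix `A` gives the polynomial
`m(x)ᵀ A m(x)`, whose coefficient of `x^k` is the `k`-th antidiagonal sum of `A`. A sum of `r`
squares `∑ q_t²` with `deg q_t ≤ d` (forced by `deg p ≤ 2d`, since leading terms of squares
cannot cancel) is `m(x)ᵀ Bᵀ B m(x)` for the `r × (d+1)` coefficient matrix `B`, and `Bᵀ B` is
positive semidefinite of rank at most `r`. Conversely, the spectral theorem writes a positive
semidefinite `A` of rank at most `r` as a sum of at most `r` rank-one matrices `v vᵀ`, and each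
contributes the square `(vᵀ m(x))²`.
-/

open Polynomial Matrix Finset
open scoped ComplexOrder

theorem Finset.exists_sum_comp_fin_eq_of_card_le {ι α M : Type*} [Fintype ι] [Zero α]
    [AddCommMonoid M] (F : α → M) (hF : F 0 = 0) {f : ι → α} {s : Finset ι} {r : ℕ}
    (hf : ∀ i ∉ s, f i = 0) (hs : #s ≤ r) :
    ∃ g : Fin r → α, ∑ i, F (f i) = ∑ j, F (g j) := by
  obtain ⟨k, rfl⟩ := Nat.exists_eq_add_of_le hs
  refine ⟨Fin.append (fun j => f (s.equivFin.symm j)) 0, ?_⟩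
  rw [Fin.sum_univ_add, ← sum_subset (subset_univ s) fun i _ hi => by rw [hf i hi, hF],
    ← s.sum_coe_sort]
  simp only [Fin.append_left, Fin.append_right, Pi.zero_apply, hF, sum_const_zero, add_zero]
  exact Fintype.sum_equiv s.equivFin _ _ fun i => by simp

theorem Matrix.PosSemidef.exists_eq_sum_vecMulVec_of_rank_le {𝕜 n : Type*} [RCLike 𝕜]
    [Fintype n] [DecidableEq n] {A : Matrix n n 𝕜} (hA : A.PosSemidef) {r : ℕ}
    (hr : A.rank ≤ r) : ∃ v : Fin r → n → 𝕜, A = ∑ t, vecMulVec (v t) (star (v t)) := by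
  -- `A = ∑ₖ λₖ uₖ uₖᴴ`, and only `rank A` of the eigenvalues `λₖ` are nonzero.
  set U := (hA.1.eigenvectorUnitary : Matrix n n 𝕜)
  set w : n → n → 𝕜 := fun k i => (√(hA.1.eigenvalues k) : 𝕜) * U i k
  have hA_eq : A = ∑ k, vecMulVec (w k) (star (w k)) := by
    conv_lhs => rw [hA.1.spectral_theorem, Unitary.conjStarAlgAut_apply]
    ext i j
    simp only [Matrix.mul_apply, diagonal_apply, Matrix.sum_apply, vecMulVec_apply, w, U,
      IsHermitian.eigenvectorUnitary_apply, Function.comp_apply, mul_ite, mul_zero, sum_ite_eq',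
      mem_univ, ↓reduceIte, star_apply, RCLike.star_def, Pi.star_apply, star_mul',
      RCLike.conj_ofReal]
    refine sum_congr rfl fun k _ => ?_
    rw [mul_mul_mul_comm, ← RCLike.ofReal_mul, Real.mul_self_sqrt (hA.eigenvalues_nonneg k)]
    ring
  have hw : ∀ k ∉ univ.filter (hA.1.eigenvalues · ≠ 0), w k = 0 := by
    intro k hk
    simp only [mem_filter, mem_univ, true_and, not_not] at hk
    simp [w, hk, ← Pi.zero_def]
  obtain ⟨v, hv⟩ := exists_sum_comp_fin_eq_of_card_le (fun x => vecMulVec x (star x)) (by simp)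
    hw (r := r) (by rwa [← Fintype.card_subtype, ← hA.1.rank_eq_card_non_zero_eigs])
  exact ⟨v, hA_eq.trans hv⟩

namespace Polynomial

section CommSemiring

variable {R : Type*} [CommSemiring R]

noncomputable def gramPoly {n : ℕ} (A : Matrix (Fin n) (Fin n) R) : R[X] :=
  ∑ i : Fin n, ∑ j : Fin n, C (A i j) * X ^ ((i : ℕ) + (j : ℕ))

theorem coeff_gramPoly {n : ℕ} (A : Matrix (Fin n) (Fin n) R) (k : ℕ) :
    (gramPoly A).coeff k =
      ∑ i : Fin n, ∑ j : Fin n, if (i : ℕ) + (j : ℕ) = k then A i j else 0 := by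
  simp [gramPoly, finsetSum_coeff, coeff_C_mul, coeff_X_pow, eq_comm]

theorem natDegree_gramPoly_le {d : ℕ} (A : Matrix (Fin (d + 1)) (Fin (d + 1)) R) :
    (gramPoly A).natDegree ≤ 2 * d :=
  natDegree_sum_le_of_forall_le _ _ fun i _ => natDegree_sum_le_of_forall_le _ _ fun j _ =>
    (natDegree_C_mul_X_pow_le _ _).trans (by omega)

theorem eq_gramPoly_iff {d : ℕ} {p : R[X]} (hp : p.natDegree ≤ 2 * d)
    (A : Matrix (Fin (d + 1)) (Fin (d + 1)) R) :
    p = gramPoly A ↔ ∀ k ≤ 2 * d, p.coeff k =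
      ∑ i : Fin (d + 1), ∑ j : Fin (d + 1), if (i : ℕ) + (j : ℕ) = k then A i j else 0 := by
  simp only [ext_iff_natDegree_le hp (natDegree_gramPoly_le A), coeff_gramPoly]

theorem gramPoly_sum_vecMulVec {n : ℕ} {ι : Type*} [Fintype ι] (v : ι → Fin n → R) :
    gramPoly (∑ t, vecMulVec (v t) (v t)) =
      ∑ t, (∑ i : Fin n, C (v t i) * X ^ (i : ℕ)) ^ 2 := by
  simp only [gramPoly, Matrix.sum_apply, vecMulVec_apply, map_sum, sum_mul, sq, mul_sum]
  rw [sum_comm_cycle]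
  refine sum_congr rfl fun t _ => sum_congr rfl fun i _ => sum_congr rfl fun j _ => ?_
  rw [map_mul, pow_add]
  ring

theorem eq_sum_fin_C_mul_X_pow {d : ℕ} {q : R[X]} (hq : q.natDegree ≤ d) :
    q = ∑ i : Fin (d + 1), C (q.coeff i) * X ^ (i : ℕ) := by
  rw [Fin.sum_univ_eq_sum_range (fun i => C (q.coeff i) * X ^ i)]
  exact as_sum_range_C_mul_X_pow' q (Nat.lt_succ_of_le hq)

end CommSemiring

theorem two_mul_natDegree_le_natDegree_sum_sq {R ι : Type*} [CommRing R] [LinearOrder R]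
    [IsStrictOrderedRing R] {s : Finset ι} (q : ι → R[X]) {t : ι} (ht : t ∈ s) :
    2 * (q t).natDegree ≤ (∑ i ∈ s, q i ^ 2).natDegree := by
  set m := s.sup fun i => (q i).natDegree
  have hle : ∀ i ∈ s, (q i).natDegree ≤ m := fun i hi => le_sup (f := fun i => (q i).natDegree) hi
  obtain ⟨t₀, ht₀, hm⟩ : ∃ t₀ ∈ s, m = (q t₀).natDegree :=
    exists_mem_eq_sup s ⟨t, ht⟩ fun i => (q i).natDegree
  by_cases hq₀ : q t₀ = 0
  · have := hle t ht
    simp only [hm, hq₀, natDegree_zero, nonpos_iff_eq_zero] at this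
    simp [this]
  have hcoeff : (∑ i ∈ s, q i ^ 2).coeff (2 * m) = ∑ i ∈ s, (q i).coeff m ^ 2 := by
    rw [finsetSum_coeff]
    exact sum_congr rfl fun i hi => coeff_pow_of_natDegree_le (hle i hi)
  have hpos : 0 < ∑ i ∈ s, (q i).coeff m ^ 2 :=
    calc 0 < (q t₀).coeff m ^ 2 := by
          rw [hm]; exact pow_two_pos_of_ne_zero (leadingCoeff_ne_zero.mpr hq₀)
      _ ≤ _ := single_le_sum (f := fun i => (q i).coeff m ^ 2) (fun i _ => sq_nonneg _) ht₀
  exact (Nat.mul_le_mul_left 2 (hle t ht)).trans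
    (le_natDegree_of_ne_zero (hcoeff ▸ hpos.ne'))

theorem exists_posSemidef_gramPoly_eq_sum_sq {d r : ℕ} (q : Fin r → ℝ[X])
    (hdeg : (∑ t, q t ^ 2).natDegree ≤ 2 * d) :
    ∃ A : Matrix (Fin (d + 1)) (Fin (d + 1)) ℝ,
      A.PosSemidef ∧ A.rank ≤ r ∧ gramPoly A = ∑ t, q t ^ 2 := by
  let v (t : Fin r) (i : Fin (d + 1)) : ℝ := (q t).coeff i
  let B : Matrix (Fin r) (Fin (d + 1)) ℝ := of v
  have hBB : Bᵀ * B = ∑ t, vecMulVec (v t) (v t) := by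
    ext i j
    simp [B, Matrix.mul_apply, Matrix.sum_apply, vecMulVec_apply]
  refine ⟨Bᵀ * B, posSemidef_conjTranspose_mul_self B,
    (rank_mul_le_right _ _).trans (B.rank_le_card_height.trans (by simp)), ?_⟩
  rw [hBB, gramPoly_sum_vecMulVec]
  refine sum_congr rfl fun t _ => congrArg (· ^ 2) (eq_sum_fin_C_mul_X_pow ?_).symm
  have := two_mul_natDegree_le_natDegree_sum_sq q (mem_univ t)
  omega

theorem exists_sum_sq_eq_gramPoly {n r : ℕ} {A : Matrix (Fin n) (Fin n) ℝ} (hA : A.PosSemidef)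
    (hr : A.rank ≤ r) : ∃ q : Fin r → ℝ[X], ∑ t, q t ^ 2 = gramPoly A := by
  obtain ⟨v, rfl⟩ := hA.exists_eq_sum_vecMulVec_of_rank_le hr
  simp only [star_trivial]
  exact ⟨_, (gramPoly_sum_vecMulVec v).symm⟩

end Polynomial

/-- Gram matrix correspondence for univariate polynomials: a polynomial of degree at
most `2d` is a sum of squares iff its coefficients are the antidiagonal sums of a PSD
`(d+1) × (d+1)` matrix; and it is a sum of at most `r` squares iff such a matrix can be
chosen with rank at most `r`. -/
theorem sos_iff_gram_matrix (d : ℕ) (p : Polynomial ℝ) (hdeg : p.natDegree ≤ 2 * d) :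
    ((∃ (k : ℕ) (q : Fin k → Polynomial ℝ), p = ∑ i, (q i) ^ 2) ↔
      ∃ A : Matrix (Fin (d + 1)) (Fin (d + 1)) ℝ, A.PosSemidef ∧
        ∀ k ≤ 2 * d, p.coeff k =
          ∑ i : Fin (d + 1), ∑ j : Fin (d + 1),
            if (i : ℕ) + (j : ℕ) = k then A i j else 0) ∧
    (∀ r : ℕ,
      (∃ q : Fin r → Polynomial ℝ, p = ∑ i, (q i) ^ 2) ↔
      ∃ A : Matrix (Fin (d + 1)) (Fin (d + 1)) ℝ, A.PosSemidef ∧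
        (∀ k ≤ 2 * d, p.coeff k =
          ∑ i : Fin (d + 1), ∑ j : Fin (d + 1),
            if (i : ℕ) + (j : ℕ) = k then A i j else 0) ∧
        A.rank ≤ r) := by
  have hsos_rank (r : ℕ) : (∃ q : Fin r → ℝ[X], p = ∑ i, q i ^ 2) ↔
      ∃ A : Matrix (Fin (d + 1)) (Fin (d + 1)) ℝ, A.PosSemidef ∧ p = gramPoly A ∧ A.rank ≤ r := by
    constructor
    · rintro ⟨q, rfl⟩
      obtain ⟨A, hA, hr, hq⟩ := exists_posSemidef_gramPoly_eq_sum_sq q hdeg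
      exact ⟨A, hA, hq.symm, hr⟩
    · rintro ⟨A, hA, rfl, hr⟩
      obtain ⟨q, hq⟩ := exists_sum_sq_eq_gramPoly hA hr
      exact ⟨q, hq.symm⟩
  simp only [← eq_gramPoly_iff hdeg] at hsos_rank ⊢
  refine ⟨⟨fun ⟨r, q, hq⟩ => ?_, fun ⟨A, hA, hp⟩ => ?_⟩, hsos_rank⟩
  · obtain ⟨A, hA, hp, -⟩ := (hsos_rank r).1 ⟨q, hq⟩
    exact ⟨A, hA, hp⟩
  · exact ⟨d + 1, (hsos_rank (d + 1)).2 ⟨A, hA, hp, A.rank_le_card_height.trans (by simp)⟩⟩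
end

section
/- The cone of sums of squares in bounded degree is closed: let n, d be fixed and let (p_m) be a sequence of polynomials in ℝ[x_1,...,x_n], each of total degree at most 2d and each a sum of squares of polynomials. If there is a polynomial p such that for every monomial exponent α the coefficient of α in p_m converges to the coefficient of α in p as m → ∞, then p is a sum of squares of polynomials. -/
/-!
If `∑ qᵢ²` has degree at most `2d` then every `qᵢ` has degree at most `d`, since the top-degree
homogeneous parts of the `qᵢ²` cannot cancel. Hence the sums of squares of degree at most `2d` are
exactly the polynomials `∑_{α,β} G_{αβ} X^(α+β)` with `G` a positive semidefinite Gram matrix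
indexed by the exponents of degree at most `d`. The positive semidefinite cone is closed and meets
the kernel of `G ↦ ∑ G_{αβ} X^(α+β)` only in `0`. Such a cone has closed linear image: if the
images of a sequence converge, the sequence stays bounded, since otherwise its normalisation would
accumulate at a unit vector of the cone in the kernel.
-/

open MvPolynomial Filter Topology

section ConeImage

variable {E F : Type*} [NormedAddCommGroup E] [NormedSpace ℝ E] [FiniteDimensional ℝ E]
  [AddCommGroup F] [Module ℝ F] [TopologicalSpace F] [IsTopologicalAddGroup F]
  [ContinuousSMul ℝ F] [T2Space F] {f : E →ₗ[ℝ] F} {K : Set E} {x : ℕ → E} {y : F}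

theorem exists_frequently_norm_le_of_tendsto_map (hK : IsClosed K)
    (hsmul : ∀ v ∈ K, ∀ t : ℝ, 0 < t → t • v ∈ K) (hker : ∀ v ∈ K, f v = 0 → v = 0)
    (hx : ∀ m, x m ∈ K) (hy : Tendsto (fun m => f (x m)) atTop (𝓝 y)) :
    ∃ R, ∃ᶠ m in atTop, ‖x m‖ ≤ R := by
  by_contra! hbig
  have hnorm : Tendsto (fun m => ‖x m‖) atTop atTop :=
    tendsto_atTop.2 fun R => (hbig R).mono fun _ h => h.le
  have hpos : ∀ᶠ m in atTop, 0 < ‖x m‖ := hnorm.eventually_gt_atTop 0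
  set u := fun m => ‖x m‖⁻¹ • x m
  have hu_sphere : ∀ᶠ m in atTop, u m ∈ Metric.sphere (0 : E) 1 := hpos.mono fun m hm => by
    simp [u, norm_smul, hm.ne']
  obtain ⟨z, hz, φ, hφ, hlim⟩ := tendsto_subseq_of_frequently_bounded
    Metric.isBounded_sphere hu_sphere.frequently
  rw [Metric.isClosed_sphere.closure_eq] at hz
  have hφ_top := hφ.tendsto_atTop
  have hzK : z ∈ K := hK.mem_of_tendsto hlim <| (hφ_top.eventually hpos).mono fun m hm =>
    hsmul _ (hx _) _ (inv_pos.2 hm)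
  have hfz : f z = 0 := by
    have h1 : Tendsto (fun m => f (u (φ m))) atTop (𝓝 (f z)) :=
      (f.continuous_of_finiteDimensional.tendsto z).comp hlim
    have h2 : Tendsto (fun m => f (u (φ m))) atTop (𝓝 (0 : F)) := by
      simpa [u, Function.comp_def] using ((tendsto_inv_atTop_zero.comp hnorm).smul hy).comp hφ_top
    exact tendsto_nhds_unique h1 h2
  simp [hker z hzK hfz] at hz

theorem exists_mem_map_eq_of_tendsto (hK : IsClosed K)
    (hsmul : ∀ v ∈ K, ∀ t : ℝ, 0 < t → t • v ∈ K) (hker : ∀ v ∈ K, f v = 0 → v = 0)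
    (hx : ∀ m, x m ∈ K) (hy : Tendsto (fun m => f (x m)) atTop (𝓝 y)) :
    ∃ z ∈ K, f z = y := by
  obtain ⟨R, hR⟩ := exists_frequently_norm_le_of_tendsto_map hK hsmul hker hx hy
  obtain ⟨z, -, φ, hφ, hlim⟩ := tendsto_subseq_of_frequently_bounded
    (Metric.isBounded_closedBall (x := (0 : E)) (r := R)) (by simpa using hR)
  refine ⟨z, hK.mem_of_tendsto hlim (Eventually.of_forall fun m => hx _), ?_⟩
  exact tendsto_nhds_unique ((f.continuous_of_finiteDimensional.tendsto z).comp hlim)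
    (hy.comp hφ.tendsto_atTop)

end ConeImage

open scoped ComplexOrder in
theorem Matrix.isClosed_setOf_posSemidef {𝕜 n : Type*} [RCLike 𝕜] [Fintype n] :
    IsClosed {G : Matrix n n 𝕜 | G.PosSemidef} := by
  simp only [posSemidef_iff_dotProduct_mulVec, Set.ofPred_and, Set.ofPred_forall]
  refine .inter (isClosed_eq continuous_id.matrix_conjTranspose continuous_id) ?_
  exact isClosed_iInter fun x => isClosed_le continuous_const
    (continuous_const.dotProduct (continuous_id.matrix_mulVec continuous_const))

namespace MvPolynomial

variable {σ R : Type*}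

theorem homogeneousComponent_mul_of_totalDegree_le [CommSemiring R] {p q : MvPolynomial σ R}
    {a b : ℕ} (hp : p.totalDegree ≤ a) (hq : q.totalDegree ≤ b) :
    homogeneousComponent (a + b) (p * q) = homogeneousComponent a p * homogeneousComponent b q := by
  classical
  have hp' : ∀ α : σ →₀ ℕ, a < α.degree → coeff α p = 0 := fun α h =>
    coeff_eq_zero_of_totalDegree_lt (hp.trans_lt h)
  have hq' : ∀ β : σ →₀ ℕ, b < β.degree → coeff β q = 0 := fun β h =>
    coeff_eq_zero_of_totalDegree_lt (hq.trans_lt h)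
  ext γ
  simp only [coeff_homogeneousComponent, coeff_mul]
  split_ifs with hγ
  · refine Finset.sum_congr rfl fun ⟨α, β⟩ hαβ => ?_
    have hdeg : α.degree + β.degree = a + b := by
      rw [← map_add, Finset.HasAntidiagonal.mem_antidiagonal.1 hαβ, hγ]
    rcases lt_trichotomy α.degree a with h | h | h
    · simp [hq' β (by omega)]
    · simp [h, show β.degree = b by omega]
    · simp [hp' α h]
  · refine (Finset.sum_eq_zero fun ⟨α, β⟩ hαβ => ?_).symm
    have hdeg : α.degree + β.degree = γ.degree := by
      rw [← map_add, Finset.HasAntidiagonal.mem_antidiagonal.1 hαβ]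
    split_ifs with hα hβ <;> simp_all

theorem totalDegree_lt_of_homogeneousComponent_eq_zero [CommSemiring R] {p : MvPolynomial σ R}
    {D : ℕ} (hD : 0 < D) (hp : p.totalDegree ≤ D) (h : homogeneousComponent D p = 0) :
    p.totalDegree < D := by
  refine (Finset.sup_lt_iff hD).2 fun α hα =>
    ((le_totalDegree hα).trans hp).lt_of_ne fun hαD => ?_
  have := congr_arg (coeff α) h
  rw [coeff_homogeneousComponent, if_pos (by exact hαD), coeff_zero] at this
  exact mem_support_iff.1 hα this

theorem eq_zero_of_sum_sq_eq_zero [CommRing R] [LinearOrder R] [IsStrictOrderedRing R]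
    {ι : Type*} {s : Finset ι} {q : ι → MvPolynomial σ R} (h : ∑ i ∈ s, q i ^ 2 = 0) :
    ∀ i ∈ s, q i = 0 := by
  intro i hi
  refine MvPolynomial.funext fun x => ?_
  have hx : ∑ j ∈ s, eval x (q j) ^ 2 = 0 := by simpa using congr_arg (eval x) h
  simpa using (Finset.sum_eq_zero_iff_of_nonneg fun j _ => sq_nonneg _).1 hx i hi

theorem totalDegree_le_of_totalDegree_sum_sq_le [CommRing R] [LinearOrder R]
    [IsStrictOrderedRing R] {ι : Type*} {s : Finset ι} {q : ι → MvPolynomial σ R} {d : ℕ}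
    (h : (∑ i ∈ s, q i ^ 2).totalDegree ≤ 2 * d) : ∀ i ∈ s, (q i).totalDegree ≤ d := by
  set D := s.sup fun i => (q i).totalDegree
  have hle : ∀ i ∈ s, (q i).totalDegree ≤ D := fun i hi =>
    Finset.le_sup (f := fun i => (q i).totalDegree) hi
  by_contra! ⟨i, hi, hid⟩
  have hdD : d < D := hid.trans_le (hle i hi)
  have htop : ∑ j ∈ s, homogeneousComponent D (q j) ^ 2 = 0 := calc
    _ = homogeneousComponent (D + D) (∑ j ∈ s, q j ^ 2) := by
      rw [map_sum]
      exact Finset.sum_congr rfl fun j hj => by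
        rw [sq, sq, homogeneousComponent_mul_of_totalDegree_le (hle j hj) (hle j hj)]
    _ = 0 := homogeneousComponent_eq_zero _ _ (by omega)
  have hlt : ∀ j ∈ s, (q j).totalDegree < D := fun j hj =>
    totalDegree_lt_of_homogeneousComponent_eq_zero (by omega) (hle j hj)
      (eq_zero_of_sum_sq_eq_zero htop j hj)
  exact (Finset.sup_lt_iff (Nat.zero_lt_of_lt hdD)).2 hlt |>.false

section Gram

open Matrix

variable (s : Finset (σ →₀ ℕ))

noncomputable def gramPoly [CommSemiring R] : Matrix s s R →ₗ[R] MvPolynomial σ R :=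
  ∑ α : s, ∑ β : s, monomial ((α : σ →₀ ℕ) + β) ∘ₗ entryLinearMap R R α β

variable {s}

theorem gramPoly_apply [CommSemiring R] (G : Matrix s s R) :
    gramPoly s G = ∑ α : s, ∑ β : s, monomial ((α : σ →₀ ℕ) + (β : σ →₀ ℕ)) (G α β) := by
  simp [gramPoly]

theorem gramPoly_vecMulVec [CommSemiring R] (v w : s → R) :
    gramPoly s (vecMulVec v w) =
      (∑ α : s, monomial (α : σ →₀ ℕ) (v α)) * ∑ β : s, monomial (β : σ →₀ ℕ) (w β) := by
  simp [gramPoly_apply, Finset.sum_mul_sum, monomial_mul, vecMulVec_apply]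

theorem coeff_sum_monomial [CommSemiring R] (v : s → R) (α : s) :
    coeff (α : σ →₀ ℕ) (∑ β : s, monomial (β : σ →₀ ℕ) (v β)) = v α := by
  classical
  simp [coeff_sum, coeff_monomial]

theorem sum_monomial_coeff_of_support_subset [CommSemiring R] {q : MvPolynomial σ R}
    (hq : q.support ⊆ s) : ∑ α : s, monomial (α : σ →₀ ℕ) (coeff α q) = q := by
  rw [Finset.sum_coe_sort s fun α => monomial α (coeff α q)]
  exact (Finset.sum_subset hq fun α _ hα => by rw [notMem_support_iff.1 hα, map_zero]).symm.trans
    q.as_sum.symm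

theorem exists_sum_sq_eq_gramPoly_of_posSemidef {G : Matrix s s ℝ} (hG : G.PosSemidef) :
    ∃ (k : ℕ) (q : Fin k → MvPolynomial σ ℝ), gramPoly s G = ∑ i, q i ^ 2 := by
  obtain ⟨k, v, rfl⟩ := posSemidef_iff_eq_sum_vecMulVec.1 hG
  exact ⟨k, fun i => ∑ α : s, monomial (α : σ →₀ ℕ) (v i α), by
    simp [map_sum, gramPoly_vecMulVec, sq]⟩

theorem exists_posSemidef_gramPoly_eq_sum_sq {k : ℕ} {q : Fin k → MvPolynomial σ ℝ}
    (hq : ∀ i, (q i).support ⊆ s) :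
    ∃ G : Matrix s s ℝ, G.PosSemidef ∧ gramPoly s G = ∑ i, q i ^ 2 := by
  set c : Fin k → s → ℝ := fun i α => coeff α (q i)
  refine ⟨∑ i, vecMulVec (c i) (c i), posSemidef_iff_eq_sum_vecMulVec.2 ⟨k, c, by simp⟩, ?_⟩
  simp only [map_sum, gramPoly_vecMulVec, c, sum_monomial_coeff_of_support_subset (hq _), sq]

theorem eq_zero_of_posSemidef_of_gramPoly_eq_zero {G : Matrix s s ℝ} (hG : G.PosSemidef)
    (h : gramPoly s G = 0) : G = 0 := by
  obtain ⟨k, v, rfl⟩ := posSemidef_iff_eq_sum_vecMulVec.1 hG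
  have hsq : ∀ i ∈ Finset.univ, ∑ α : s, monomial (α : σ →₀ ℕ) (v i α) = 0 :=
    eq_zero_of_sum_sq_eq_zero (by simpa [map_sum, gramPoly_vecMulVec, sq] using h)
  have hv : ∀ i, v i = 0 := fun i => _root_.funext fun α : s => by
    simpa only [coeff_sum_monomial, coeff_zero, Pi.zero_apply] using
      congr_arg (coeff (α : σ →₀ ℕ)) (hsq i (Finset.mem_univ i))
  simp [hv]

end Gram

end MvPolynomial

open scoped Matrix.Norms.Elementwise in
/-- The cone of sums of squares of bounded degree is closed: a coefficientwise limit of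
sums of squares of total degree at most `2d` is a sum of squares. -/
theorem sos_cone_isClosed {n d : ℕ} (pm : ℕ → MvPolynomial (Fin n) ℝ)
    (hdeg : ∀ m, (pm m).totalDegree ≤ 2 * d)
    (hsos : ∀ m, ∃ (k : ℕ) (q : Fin k → MvPolynomial (Fin n) ℝ), pm m = ∑ i, (q i) ^ 2)
    (p : MvPolynomial (Fin n) ℝ)
    (hconv : ∀ α : Fin n →₀ ℕ,
      Tendsto (fun m => coeff α (pm m)) atTop (𝓝 (coeff α p))) :
    ∃ (k : ℕ) (q : Fin k → MvPolynomial (Fin n) ℝ), p = ∑ i, (q i) ^ 2 := by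
  set s := (Finsupp.finite_of_degree_le (σ := Fin n) d).toFinset
  have hsupp : ∀ q : MvPolynomial (Fin n) ℝ, q.totalDegree ≤ d → q.support ⊆ s :=
    fun q hq α hα => Set.Finite.mem_toFinset _ |>.2 ((le_totalDegree hα).trans hq)
  have hgram : ∀ m, ∃ G : Matrix s s ℝ, G.PosSemidef ∧ gramPoly s G = pm m := fun m => by
    obtain ⟨k, q, hq⟩ := hsos m
    have hqdeg := totalDegree_le_of_totalDegree_sum_sq_le (hq ▸ hdeg m)
    obtain ⟨G, hG, hGq⟩ := exists_posSemidef_gramPoly_eq_sum_sq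
      fun i => hsupp _ (hqdeg i (Finset.mem_univ i))
    exact ⟨G, hG, hGq.trans hq.symm⟩
  choose G hG hGpm using hgram
  let f : Matrix s s ℝ →ₗ[ℝ] (Fin n →₀ ℕ) → ℝ := LinearMap.pi (lcoeff ℝ) ∘ₗ gramPoly s
  obtain ⟨H, hH, hfH⟩ := exists_mem_map_eq_of_tendsto (f := f) Matrix.isClosed_setOf_posSemidef
    (fun _ hG _ ht => hG.smul ht.le)
    (fun _ hG h0 => eq_zero_of_posSemidef_of_gramPoly_eq_zero hG (by ext α; exact congr_fun h0 α))
    hG (y := fun α => coeff α p) (tendsto_pi_nhds.2 fun α => by simpa [f, hGpm] using hconv α)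
  have hpH : p = gramPoly s H := by ext α; exact (congr_fun hfH α).symm
  exact hpH ▸ exists_sum_sq_eq_gramPoly_of_posSemidef hH
end

section
/- Let C be a closed convex cone in ℝ^n and let π : ℝ^n → ℝ^m be a linear map. If C ∩ ker(π) = {0}, then the image π(C) is a closed subset of ℝ^m. -/
/-- If `C` is a closed convex cone in `ℝⁿ` and `π` is a linear map with
`C ∩ ker π = {0}`, then `π(C)` is closed. -/
theorem image_of_closed_cone_isClosed {n m : ℕ} (C : Set (Fin n → ℝ))
    (hclosed : IsClosed C)
    (hadd : ∀ x ∈ C, ∀ y ∈ C, x + y ∈ C)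
    (hsmul : ∀ (c : ℝ), 0 ≤ c → ∀ x ∈ C, c • x ∈ C)
    (π : (Fin n → ℝ) →ₗ[ℝ] (Fin m → ℝ))
    (hker : C ∩ (LinearMap.ker π : Set (Fin n → ℝ)) = {0}) :
    IsClosed (π '' C) := by
  have hπc : Continuous π := π.continuous_of_finiteDimensional
  set S : Set (Fin n → ℝ) := C ∩ Metric.sphere 0 1 with hS
  by_cases hSe : S = ∅
  · -- C = {0}
    have hC : C = {0} := by
      apply Set.Subset.antisymm
      · intro x hx
        by_contra hx0
        have hx0' : x ≠ 0 := hx0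
        have hnx : ‖x‖ ≠ 0 := norm_ne_zero_iff.mpr hx0'
        have hmem : ‖x‖⁻¹ • x ∈ S := by
          refine ⟨hsmul _ (by positivity) x hx, ?_⟩
          simp [norm_smul, abs_of_nonneg (inv_nonneg.mpr (norm_nonneg x)),
            inv_mul_cancel₀ hnx]
        rw [hSe] at hmem
        exact hmem
      · intro x hx
        simp only [Set.mem_singleton_iff] at hx
        subst hx
        have : (0 : Fin n → ℝ) ∈ C ∩ (LinearMap.ker π : Set (Fin n → ℝ)) := by
          rw [hker]; rfl
        exact this.1
    rw [hC]
    simp only [Set.image_singleton, map_zero]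
    exact isClosed_singleton
  · obtain ⟨s₀, hs₀⟩ := Set.nonempty_iff_ne_empty.mpr hSe
    have hScompact : IsCompact S := by
      exact (isCompact_sphere (0 : Fin n → ℝ) 1).inter_left hclosed
    obtain ⟨x₀, hx₀S, hx₀min⟩ :=
      hScompact.exists_isMinOn ⟨s₀, hs₀⟩ ((hπc.norm).continuousOn)
    set ε : ℝ := ‖π x₀‖ with hε
    have hεpos : 0 < ε := by
      rcases (norm_nonneg (π x₀)).lt_or_eq with h | h
      · exact h
      · exfalso
        have hk : x₀ ∈ C ∩ (LinearMap.ker π : Set (Fin n → ℝ)) := by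
          refine ⟨hx₀S.1, ?_⟩
          simp only [SetLike.mem_coe, LinearMap.mem_ker]
          exact norm_eq_zero.mp h.symm
        rw [hker] at hk
        have : ‖x₀‖ = 1 := by simpa using hx₀S.2
        rw [Set.mem_singleton_iff.mp hk] at this
        simp at this
    -- key bound
    have hbound : ∀ x ∈ C, ε * ‖x‖ ≤ ‖π x‖ := by
      intro x hx
      by_cases hx0 : x = 0
      · subst hx0; simp
      · have hnx : (0:ℝ) < ‖x‖ := norm_pos_iff.mpr hx0
        have hmem : ‖x‖⁻¹ • x ∈ S := by
          refine ⟨hsmul _ (by positivity) x hx, ?_⟩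
          simp [norm_smul, abs_of_nonneg (inv_nonneg.mpr (norm_nonneg x)),
            inv_mul_cancel₀ hnx.ne']
        have := hx₀min hmem
        simp only [Set.mem_setOf_eq, map_smul, norm_smul, Real.norm_eq_abs,
          abs_of_nonneg (inv_nonneg.mpr (norm_nonneg x))] at this
        calc ε * ‖x‖ ≤ (‖x‖⁻¹ * ‖π x‖) * ‖x‖ := by
              exact mul_le_mul_of_nonneg_right this (norm_nonneg x)
          _ = ‖π x‖ := by field_simp
    -- sequential closedness
    apply IsSeqClosed.isClosed
    intro u y hu huy
    choose x hxC hxπ using hu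
    obtain ⟨R, hR⟩ : ∃ R : ℝ, ∀ k, ‖u k‖ ≤ R := by
      have hb : Bornology.IsBounded (Set.range u) :=
        huy.cauchySeq.isBounded_range
      obtain ⟨R, hR⟩ := hb.exists_norm_le
      exact ⟨R, fun k => hR _ ⟨k, rfl⟩⟩
    have hxball : ∀ k, x k ∈ C ∩ Metric.closedBall 0 (ε⁻¹ * R) := by
      intro k
      refine ⟨hxC k, ?_⟩
      rw [Metric.mem_closedBall, dist_zero_right]
      have h1 : ε * ‖x k‖ ≤ ‖u k‖ := by
        have := hbound (x k) (hxC k); rwa [hxπ k] at this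
      have h2 : ε * ‖x k‖ ≤ R := h1.trans (hR k)
      calc ‖x k‖ = ε⁻¹ * (ε * ‖x k‖) := by field_simp
        _ ≤ ε⁻¹ * R := mul_le_mul_of_nonneg_left h2 (by positivity)
    have hKc : IsCompact (C ∩ Metric.closedBall (0 : Fin n → ℝ) (ε⁻¹ * R)) :=
      (isCompact_closedBall (0 : Fin n → ℝ) (ε⁻¹ * R)).inter_left hclosed
    obtain ⟨a, haK, φ, hφ, hφt⟩ := hKc.tendsto_subseq hxball
    refine ⟨a, haK.1, ?_⟩
    have h1 : Filter.Tendsto (fun k => π (x (φ k))) Filter.atTop (nhds (π a)) :=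
      (hπc.tendsto a).comp hφt
    have h2 : Filter.Tendsto (fun k => π (x (φ k))) Filter.atTop (nhds y) := by
      have : (fun k => π (x (φ k))) = u ∘ φ := by
        funext k; exact hxπ (φ k)
      rw [this]
      exact huy.comp hφ.tendsto_atTop
    exact tendsto_nhds_unique h1 h2
end

section
/- Extreme rays of spectrahedral cones via kernel maximality: let L be a linear subspace of the space of real symmetric n×n matrices and let C = {X in L : X is positive semidefinite}, a spectrahedral cone. A nonzero M in C spans an extreme ray of C if and only if the kernel of M is maximal over L in the following sense: for every A in L with ker(M) ⊆ ker(A) (kernels taken as kernels of the associated linear maps x ↦ Mx and x ↦ Ax on ℝ^n), A is a real scalar multiple of M. -/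
/-!
If `M = A + B` with `A, B` positive semidefinite, then `ker M ⊆ ker A`, so kernel maximality
puts `A` and `B` on the ray of `M`; the signs of the scalars come from `A, B ⪰ 0` and `M ≠ 0`.

Conversely, let `A` be symmetric with `ker M ⊆ ker A`. Both quadratic forms `xᵀMx` and
`xᵀAx` only see the component of `x` in a complement `R` of `ker M`, and `xᵀMx` is positive
definite on `R`. Since both forms are homogeneous of degree two, compactness of the unit
sphere of `R` gives `ε > 0` with `ε |xᵀAx| ≤ xᵀMx`. Then `M ± εA` lie in the cone and `M` is
their midpoint, so extremality makes `A` a multiple of `M`.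
-/

section SqHomogeneous

variable {E : Type*} [NormedAddCommGroup E] [NormedSpace ℝ E] [FiniteDimensional ℝ E]

theorem exists_pos_mul_abs_le_of_sq_homogeneous {f g : E → ℝ} (hf : Continuous f)
    (hg : Continuous g) (hf_smul : ∀ (c : ℝ) x, f (c • x) = c ^ 2 * f x)
    (hg_smul : ∀ (c : ℝ) x, g (c • x) = c ^ 2 * g x) (hf_pos : ∀ x ≠ 0, 0 < f x) :
    ∃ ε > 0, ∀ x, ε * |g x| ≤ f x := by
  have hf_zero : f 0 = 0 := by simpa using hf_smul 0 0
  have hf_nonneg : ∀ x, 0 ≤ f x := fun x ↦ by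
    rcases eq_or_ne x 0 with rfl | hx
    exacts [hf_zero.ge, (hf_pos x hx).le]
  have hf_pos_sphere : ∀ y ∈ Metric.sphere (0 : E) 1, 0 < f y := fun y hy ↦
    hf_pos y (ne_zero_of_mem_sphere one_ne_zero ⟨y, hy⟩)
  obtain ⟨C, hC⟩ := (isCompact_sphere (0 : E) 1).exists_bound_of_continuousOn
    (hg.continuousOn.div hf.continuousOn fun y hy ↦ (hf_pos_sphere y hy).ne')
  have hsphere : ∀ y ∈ Metric.sphere (0 : E) 1, |g y| ≤ |C| * f y := by
    intro y hy
    have := (hC y hy).trans (le_abs_self C)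
    rwa [Pi.div_apply, Real.norm_eq_abs, abs_div, abs_of_pos (hf_pos_sphere y hy),
      div_le_iff₀ (hf_pos_sphere y hy)] at this
  have hbound : ∀ x, |g x| ≤ |C| * f x := by
    intro x
    rcases eq_or_ne x 0 with rfl | hx
    · simp [hf_zero, show g 0 = 0 by simpa using hg_smul 0 0]
    have hy : ‖x‖⁻¹ • x ∈ Metric.sphere (0 : E) 1 := by simp [norm_smul, hx]
    rw [← smul_inv_smul₀ (norm_ne_zero_iff.mpr hx) x, hf_smul, hg_smul, abs_mul,
      abs_sq, mul_left_comm]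
    exact mul_le_mul_of_nonneg_left (hsphere _ hy) (sq_nonneg _)
  refine ⟨(|C| + 1)⁻¹, by positivity, fun x ↦ ?_⟩
  rw [inv_mul_le_iff₀ (by positivity)]
  nlinarith [hbound x, hf_nonneg x]

end SqHomogeneous

namespace Matrix

variable {n : Type*}

open scoped MatrixOrder in
theorem PosSemidef.nonneg_of_smul {M : Matrix n n ℝ} (hM : M.PosSemidef) (hM0 : M ≠ 0) {c : ℝ}
    (hc : (c • M).PosSemidef) : 0 ≤ c := by
  by_contra! hneg
  have : (-M).PosSemidef := by
    simpa [smul_smul, inv_mul_cancel₀ hneg.ne] using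
      hc.smul (inv_nonneg.mpr (neg_nonneg.mpr hneg.le))
  exact hM0 (le_antisymm (neg_nonneg.mp this.nonneg) hM.nonneg)

theorem PosSemidef.isSymm {M : Matrix n n ℝ} (hM : M.PosSemidef) : M.IsSymm :=
  isHermitian_iff_isSymm.mp hM.isHermitian

variable [Fintype n]

theorem dotProduct_smul_mulVec_smul {R : Type*} [CommSemiring R] (A : Matrix n n R) (c : R)
    (x : n → R) : (c • x) ⬝ᵥ A *ᵥ (c • x) = c ^ 2 * (x ⬝ᵥ A *ᵥ x) := by
  rw [mulVec_smul, dotProduct_smul, smul_dotProduct, smul_eq_mul, smul_eq_mul, ← mul_assoc, sq]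

theorem IsSymm.dotProduct_add_mulVec_add_of_mulVec_eq_zero {R : Type*} [CommSemiring R]
    {A : Matrix n n R} (hA : A.IsSymm) {u : n → R} (hu : A *ᵥ u = 0) (v : n → R) :
    (u + v) ⬝ᵥ A *ᵥ (u + v) = v ⬝ᵥ A *ᵥ v := by
  rw [mulVec_add, hu, zero_add, add_dotProduct, dotProduct_mulVec, ← mulVec_transpose, hA.eq, hu,
    zero_dotProduct, zero_add]

theorem PosSemidef.dotProduct_mulVec_self_nonneg {M : Matrix n n ℝ} (hM : M.PosSemidef)
    (x : n → ℝ) : 0 ≤ x ⬝ᵥ M *ᵥ x := by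
  simpa using hM.dotProduct_mulVec_nonneg x

theorem PosSemidef.mulVec_eq_zero_of_dotProduct_mulVec_self {M : Matrix n n ℝ}
    (hM : M.PosSemidef) {x : n → ℝ} (hx : x ⬝ᵥ M *ᵥ x = 0) : M *ᵥ x = 0 :=
  (hM.dotProduct_mulVec_zero_iff x).mp (by simpa using hx)

theorem PosSemidef.exists_pos_mul_abs_le_of_ker_le {M A : Matrix n n ℝ} (hM : M.PosSemidef)
    (hA : A.IsSymm) (hker : LinearMap.ker M.mulVecLin ≤ LinearMap.ker A.mulVecLin) :
    ∃ ε > 0, ∀ x, ε * |x ⬝ᵥ A *ᵥ x| ≤ x ⬝ᵥ M *ᵥ x := by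
  obtain ⟨R, hKR⟩ := (LinearMap.ker M.mulVecLin).exists_isCompl
  have hpos : ∀ v : R, v ≠ 0 → 0 < (v : n → ℝ) ⬝ᵥ M *ᵥ v := by
    intro v hv
    refine (hM.dotProduct_mulVec_self_nonneg v).lt_of_ne fun h ↦ hv ?_
    have hvK : (v : n → ℝ) ∈ LinearMap.ker M.mulVecLin :=
      hM.mulVec_eq_zero_of_dotProduct_mulVec_self h.symm
    exact Subtype.ext (Submodule.disjoint_def.mp hKR.disjoint _ hvK v.2)
  obtain ⟨ε, hε, hR⟩ := exists_pos_mul_abs_le_of_sq_homogeneous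
    (f := fun v : R ↦ (v : n → ℝ) ⬝ᵥ M *ᵥ v) (g := fun v : R ↦ (v : n → ℝ) ⬝ᵥ A *ᵥ v)
    (by fun_prop) (by fun_prop) (fun c v ↦ dotProduct_smul_mulVec_smul M c v)
    (fun c v ↦ dotProduct_smul_mulVec_smul A c v) hpos
  refine ⟨ε, hε, fun x ↦ ?_⟩
  obtain ⟨u, hu, v, hv, rfl⟩ :=
    Submodule.mem_sup.mp (hKR.sup_eq_top ▸ Submodule.mem_top (x := x))
  rw [hM.isSymm.dotProduct_add_mulVec_add_of_mulVec_eq_zero hu,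
    hA.dotProduct_add_mulVec_add_of_mulVec_eq_zero (hker hu)]
  exact hR ⟨v, hv⟩

theorem IsSymm.posSemidef_add_smul_of_mul_abs_le {M A : Matrix n n ℝ} (hM : M.IsSymm)
    (hA : A.IsSymm) {ε : ℝ} (h : ∀ x, ε * |x ⬝ᵥ A *ᵥ x| ≤ x ⬝ᵥ M *ᵥ x) {c : ℝ} (hc : |c| ≤ ε) :
    (M + c • A).PosSemidef := by
  refine .of_dotProduct_mulVec_nonneg (isHermitian_iff_isSymm.mpr (hM.add (hA.smul c)))
    fun x ↦ ?_
  have hcA : |c * (x ⬝ᵥ A *ᵥ x)| ≤ ε * |x ⬝ᵥ A *ᵥ x| := by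
    rw [abs_mul]; exact mul_le_mul_of_nonneg_right hc (abs_nonneg _)
  simp only [star_trivial, add_mulVec, smul_mulVec, dotProduct_add, dotProduct_smul, smul_eq_mul]
  linarith [neg_abs_le (c * (x ⬝ᵥ A *ᵥ x)), h x]

theorem PosSemidef.ker_add_le_left {A B : Matrix n n ℝ} (hA : A.PosSemidef)
    (hB : B.PosSemidef) : LinearMap.ker (A + B).mulVecLin ≤ LinearMap.ker A.mulVecLin := by
  intro x (hx : (A + B) *ᵥ x = 0)
  have hsum : x ⬝ᵥ A *ᵥ x + x ⬝ᵥ B *ᵥ x = 0 := by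
    rw [← dotProduct_add, ← add_mulVec, hx, dotProduct_zero]
  exact hA.mulVec_eq_zero_of_dotProduct_mulVec_self <| ((add_eq_zero_iff_of_nonneg
    (hA.dotProduct_mulVec_self_nonneg x) (hB.dotProduct_mulVec_self_nonneg x)).mp hsum).1

end Matrix

/-- Extreme rays of a spectrahedral cone `C = 𝒮₊ⁿ ∩ L` are characterized by kernel
maximality: a nonzero PSD matrix `M ∈ L` spans an extreme ray of `C` iff every `A ∈ L`
whose kernel contains the kernel of `M` is a scalar multiple of `M`. -/
theorem spectrahedral_extreme_ray_iff_kernel_maximal {n : ℕ}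
    (L : Submodule ℝ (Matrix (Fin n) (Fin n) ℝ))
    (hLsymm : ∀ A ∈ L, A.IsSymm)
    (M : Matrix (Fin n) (Fin n) ℝ) (hML : M ∈ L) (hMpsd : M.PosSemidef) (hM0 : M ≠ 0) :
    (∀ A B : Matrix (Fin n) (Fin n) ℝ,
        A ∈ L → A.PosSemidef → B ∈ L → B.PosSemidef → A + B = M →
        ∃ s t : ℝ, 0 ≤ s ∧ 0 ≤ t ∧ A = s • M ∧ B = t • M) ↔
    (∀ A ∈ L, LinearMap.ker M.mulVecLin ≤ LinearMap.ker A.mulVecLin →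
      ∃ c : ℝ, A = c • M) := by
  constructor
  · intro hext A hAL hker
    obtain ⟨ε, hε, hbound⟩ := hMpsd.exists_pos_mul_abs_le_of_ker_le (hLsymm A hAL) hker
    have half_mem : ∀ c : ℝ, (2⁻¹ : ℝ) • (M + c • A) ∈ L := fun c ↦
      L.smul_mem _ (L.add_mem hML (L.smul_mem c hAL))
    have half_psd : ∀ c : ℝ, |c| ≤ ε → ((2⁻¹ : ℝ) • (M + c • A)).PosSemidef := fun c hc ↦
      (hMpsd.isSymm.posSemidef_add_smul_of_mul_abs_le (hLsymm A hAL) hbound hc).smul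
        (by norm_num)
    obtain ⟨s, -, -, -, hs, -⟩ := hext _ _ (half_mem ε) (half_psd ε (abs_of_pos hε).le)
      (half_mem (-ε)) (half_psd (-ε) (by rw [abs_neg, abs_of_pos hε])) (by module)
    refine ⟨ε⁻¹ * (2 * s - 1), ?_⟩
    rw [mul_smul, eq_inv_smul_iff₀ hε.ne']
    linear_combination (norm := module) (2 : ℝ) • hs
  · intro hmax A B hAL hA hBL hB hAB
    obtain ⟨s, rfl⟩ := hmax A hAL (hAB ▸ hA.ker_add_le_left hB)
    obtain rfl : B = (1 - s) • M := by rw [sub_smul, one_smul]; exact eq_sub_of_add_eq' hAB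
    exact ⟨s, 1 - s, hMpsd.nonneg_of_smul hM0 hA, hMpsd.nonneg_of_smul hM0 hB, rfl, rfl⟩
end

section
/- Let p in ℝ[x_1,...,x_n] be a polynomial of total degree d, and let its homogenization be the polynomial p̃ in ℝ[x_0, x_1, ..., x_n] defined by p̃ = Σ_α c_α · x_0^(d - |α|) · x^α, where the sum is over the exponent vectors α of monomials of p, c_α is the coefficient of x^α in p, and |α| is the total degree of α (equivalently p̃ = x_0^d · p(x_1/x_0, ..., x_n/x_0)). Then: (i) p is nonnegative on ℝ^n if and only if p̃ is nonnegative on ℝ^(n+1); and (ii) p is a sum of squares of polynomials if and only if p̃ is a sum of squares of polynomials. -/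
open MvPolynomial

/-- The homogenization `p̃ = Σ_α c_α · x₀^(d - |α|) · x^α` of a polynomial
`p ∈ ℝ[x₁,…,xₙ]` with respect to a new variable `x₀` (indexed by `0 : Fin (n+1)`,
the original variables being embedded via `Fin.succ`). -/
noncomputable def homogenization {n : ℕ} (d : ℕ) (p : MvPolynomial (Fin n) ℝ) :
    MvPolynomial (Fin (n + 1)) ℝ :=
  ∑ α ∈ p.support,
    C (coeff α p) * (X 0) ^ (d - α.sum fun _ e => e) * rename Fin.succ (monomial α 1)

/-!
`p̃` is homogeneous of degree `d` and dehomogenizes to `p`, so `p̃(w) = w₀ᵈ · p(w/w₀)` for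
`w₀ ≠ 0`, while on `w₀ = 0` it is the top-degree form `p_d` of `p`. A homogeneous polynomial is
determined by its dehomogenization (its values off `x₀ = 0` are, and `x₀` is not a zero
divisor), so `(Σ qᵢ²)~ = Σ q̃ᵢ²` once the degrees match; conversely dehomogenization is a ring
map and carries an SOS decomposition of `p̃` to one of `p`.

For (i), if `p ≥ 0` then `p_d ≥ 0`, as the limit of `t ↦ tᵈ p(u/t)` at `0⁺`; this forces `d` to
be even, which settles the sign of `w₀ᵈ`. For (ii), the top forms of the `qᵢ` in `p = Σ qᵢ²`
cannot cancel: at `x₀ = 0`, `Σ q̃ᵢ²` becomes a nonzero sum of squares of top forms, so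
`deg p = 2 · maxᵢ deg qᵢ`.
-/

namespace MvPolynomial

variable {σ R : Type*}

theorem eq_of_eval_eq_of_ne_zero [CommRing R] [IsDomain R] [Infinite R] (i : σ)
    {P Q : MvPolynomial σ R} (h : ∀ w : σ → R, w i ≠ 0 → eval w P = eval w Q) : P = Q := by
  refine mul_left_cancel₀ (X_ne_zero i) (funext fun w => ?_)
  by_cases hw : w i = 0 <;> simp [hw, h]

theorem IsHomogeneous.eval_smul [CommSemiring R] {P : MvPolynomial σ R} {d : ℕ}
    (hP : P.IsHomogeneous d) (c : R) (v : σ → R) : eval (c • v) P = c ^ d * eval v P := by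
  simp only [eval_eq, Finset.mul_sum]
  refine Finset.sum_congr rfl fun α hα => ?_
  have hdeg : ∑ i ∈ α.support, α i = d := by
    simpa [Finsupp.weight_apply, Finsupp.sum] using hP (mem_support_iff.mp hα)
  simp only [Pi.smul_apply, smul_eq_mul, mul_pow, Finset.prod_mul_distrib,
    Finset.prod_pow_eq_pow_sum, hdeg]
  ring

theorem homogeneousComponent_totalDegree_ne_zero [CommSemiring R] {p : MvPolynomial σ R}
    (hp : p ≠ 0) : homogeneousComponent p.totalDegree p ≠ 0 := by
  obtain ⟨α, hα, hdeg⟩ := Finset.exists_mem_eq_sup p.support (support_nonempty.mpr hp)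
    fun α => α.sum fun _ e => e
  refine ne_zero_iff.mpr ⟨α, ?_⟩
  rwa [coeff_homogeneousComponent, if_pos (show α.degree = p.totalDegree from hdeg.symm),
    ← mem_support_iff]

theorem totalDegree_sum_sq_le [CommSemiring R] {ι : Type*} [Fintype ι] {q : ι → MvPolynomial σ R}
    {m : ℕ} (hq : ∀ i, (q i).totalDegree ≤ m) : (∑ i, q i ^ 2).totalDegree ≤ 2 * m :=
  (totalDegree_finsetSum _ _).trans <| Finset.sup_le fun i _ =>
    (totalDegree_pow _ _).trans (by linarith [hq i])

theorem IsHomogeneous.eval_eq_pow_mul_eval_cons_one {K : Type*} [Field K] {n d : ℕ}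
    {P : MvPolynomial (Fin (n + 1)) K} (hP : P.IsHomogeneous d) {w : Fin (n + 1) → K}
    (hw : w 0 ≠ 0) : eval w P = w 0 ^ d * eval (Fin.cons 1 ((w 0)⁻¹ • Fin.tail w)) P := by
  have hw' : w = w 0 • Fin.cons 1 ((w 0)⁻¹ • Fin.tail w) := by
    funext i
    refine Fin.cases ?_ (fun i => ?_) i <;> simp [hw, Fin.tail]
  rw [← hP.eval_smul, ← hw']

theorem IsHomogeneous.eq_of_eval_cons_one {K : Type*} [Field K] [Infinite K] {n d : ℕ}
    {P Q : MvPolynomial (Fin (n + 1)) K} (hP : P.IsHomogeneous d) (hQ : Q.IsHomogeneous d)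
    (h : ∀ v, eval (Fin.cons 1 v) P = eval (Fin.cons 1 v) Q) : P = Q :=
  eq_of_eval_eq_of_ne_zero 0 fun w hw => by
    rw [hP.eval_eq_pow_mul_eval_cons_one hw, hQ.eval_eq_pow_mul_eval_cons_one hw, h]

end MvPolynomial

section
variable {n : ℕ}

noncomputable def dehomogenize : MvPolynomial (Fin (n + 1)) ℝ →ₐ[ℝ] MvPolynomial (Fin n) ℝ :=
  aeval (Fin.cons 1 X)

theorem isHomogeneous_homogenization {d : ℕ} {p : MvPolynomial (Fin n) ℝ}
    (hd : p.totalDegree ≤ d) : (homogenization d p).IsHomogeneous d := by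
  refine IsHomogeneous.sum _ _ _ fun α hα => ?_
  have hαd : α.degree ≤ d := (le_totalDegree hα).trans hd
  convert ((isHomogeneous_C _ _).mul ((isHomogeneous_X _ _).pow _)).mul
    (isHomogeneous_monomial (1 : ℝ) rfl).rename_isHomogeneous using 1
  change d = 0 + 1 * (d - α.degree) + α.degree
  omega

theorem eval_cons_one_homogenization (d : ℕ) (p : MvPolynomial (Fin n) ℝ) (v : Fin n → ℝ) :
    eval (Fin.cons 1 v) (homogenization d p) = eval v p := by
  simp only [homogenization, map_sum, map_mul, map_pow, eval_C, eval_X, Fin.cons_zero, one_pow,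
    mul_one, eval_rename]
  conv_rhs => rw [p.as_sum, map_sum]
  simp [eval_monomial]

theorem eval_dehomogenize (P : MvPolynomial (Fin (n + 1)) ℝ) (v : Fin n → ℝ) :
    eval v (dehomogenize P) = eval (Fin.cons 1 v) P := by
  rw [dehomogenize, aeval_eq_bind₁, eval, eval₂Hom_bind₁]
  congr
  funext i
  cases i using Fin.cases <;> simp

theorem dehomogenize_homogenization (d : ℕ) (p : MvPolynomial (Fin n) ℝ) :
    dehomogenize (homogenization d p) = p :=
  funext fun v => by rw [eval_dehomogenize, eval_cons_one_homogenization]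

theorem eval_homogenization_of_ne_zero {d : ℕ} {p : MvPolynomial (Fin n) ℝ}
    (hd : p.totalDegree ≤ d) {w : Fin (n + 1) → ℝ} (hw : w 0 ≠ 0) :
    eval w (homogenization d p) = w 0 ^ d * eval ((w 0)⁻¹ • Fin.tail w) p := by
  rw [(isHomogeneous_homogenization hd).eval_eq_pow_mul_eval_cons_one hw,
    eval_cons_one_homogenization]

theorem eval_cons_zero_homogenization {d : ℕ} {p : MvPolynomial (Fin n) ℝ}
    (hd : p.totalDegree ≤ d) (u : Fin n → ℝ) :
    eval (Fin.cons 0 u) (homogenization d p) = eval u (homogeneousComponent d p) := by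
  classical
  rw [homogenization, map_sum, homogeneousComponent_apply, map_sum, Finset.sum_filter]
  refine Finset.sum_congr rfl fun α hα => ?_
  have hαd : α.degree ≤ d := (le_totalDegree hα).trans hd
  change _ = if α.degree = d then _ else _
  rw [map_mul, map_mul, map_pow, eval_X, Fin.cons_zero, eval_C, eval_rename, Fin.cons_comp_succ,
    eval_monomial, eval_monomial]
  change _ * 0 ^ (d - α.degree) * _ = _
  split_ifs with h
  · simp [h]
  · rw [zero_pow (by omega)]
    ring

theorem eval_homogeneousComponent_nonneg_of_nonneg {d : ℕ} {p : MvPolynomial (Fin n) ℝ}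
    (hp : ∀ v, 0 ≤ eval v p) (hd : p.totalDegree ≤ d) (u : Fin n → ℝ) :
    0 ≤ eval u (homogeneousComponent d p) := by
  set g : ℝ → ℝ := fun s => eval (Fin.cons s u) (homogenization d p)
  have hg : Continuous g :=
    (continuous_eval _).comp (continuous_id.finCons (A := fun _ => ℝ) continuous_const)
  have hg_pos : Set.Ioi 0 ⊆ {s | 0 ≤ g s} := fun s (hs : 0 < s) => by
    show 0 ≤ eval (Fin.cons s u) _
    rw [eval_homogenization_of_ne_zero hd (w := Fin.cons s u) hs.ne']
    exact mul_nonneg (pow_nonneg hs.le _) (hp _)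
  have hg_zero : 0 ≤ g 0 := (isClosed_le continuous_const hg).closure_subset_iff.mpr hg_pos
    (by rw [closure_Ioi]; exact Set.self_mem_Ici)
  rwa [← eval_cons_zero_homogenization hd]

theorem even_totalDegree_of_nonneg {p : MvPolynomial (Fin n) ℝ} (hp0 : p ≠ 0)
    (hp : ∀ v, 0 ≤ eval v p) : Even p.totalDegree := by
  by_contra hodd
  rw [Nat.not_even_iff_odd] at hodd
  refine homogeneousComponent_totalDegree_ne_zero hp0 (funext fun u => ?_)
  have h1 := eval_homogeneousComponent_nonneg_of_nonneg hp le_rfl u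
  have h2 := eval_homogeneousComponent_nonneg_of_nonneg hp le_rfl ((-1 : ℝ) • u)
  rw [(homogeneousComponent_isHomogeneous _ p).eval_smul, hodd.neg_one_pow] at h2
  rw [map_zero]
  linarith

theorem homogenization_sum_sq {ι : Type*} [Fintype ι] {q : ι → MvPolynomial (Fin n) ℝ} {m : ℕ}
    (hq : ∀ i, (q i).totalDegree ≤ m) :
    homogenization (2 * m) (∑ i, q i ^ 2) = ∑ i, homogenization m (q i) ^ 2 := by
  refine (isHomogeneous_homogenization (totalDegree_sum_sq_le hq)).eq_of_eval_cons_one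
    (IsHomogeneous.sum _ _ _ fun i _ => ?_) fun v => ?_
  · rw [mul_comm]
    exact (isHomogeneous_homogenization (hq i)).pow 2
  · simp [eval_cons_one_homogenization]

theorem totalDegree_sum_sq {ι : Type*} [Fintype ι] (q : ι → MvPolynomial (Fin n) ℝ) :
    (∑ i, q i ^ 2).totalDegree = 2 * Finset.univ.sup fun i => (q i).totalDegree := by
  set m := Finset.univ.sup fun i => (q i).totalDegree
  have hq : ∀ i, (q i).totalDegree ≤ m := fun i =>
    Finset.le_sup (f := fun i => (q i).totalDegree) (Finset.mem_univ i)
  refine le_antisymm (totalDegree_sum_sq_le hq) ?_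
  rcases Nat.eq_zero_or_pos m with hm | hm
  · simp [hm]
  obtain ⟨i₀, -, hi₀⟩ := Finset.exists_mem_eq_sup Finset.univ
    (Finset.nonempty_iff_ne_empty.mpr fun h => by simp [m, h] at hm) fun i => (q i).totalDegree
  change m = _ at hi₀
  have hq₀ : q i₀ ≠ 0 := fun h => by rw [h, totalDegree_zero] at hi₀; omega
  obtain ⟨u, hu⟩ : ∃ u, eval u (homogeneousComponent m (q i₀)) ≠ 0 := by
    by_contra! h
    refine homogeneousComponent_totalDegree_ne_zero hq₀ ?_
    rw [← hi₀]
    exact funext fun u => by simp [h u]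
  have hpos : 0 < eval u (homogeneousComponent (2 * m) (∑ i, q i ^ 2)) := by
    rw [← eval_cons_zero_homogenization (totalDegree_sum_sq_le hq), homogenization_sum_sq hq]
    simp only [map_sum, map_pow, eval_cons_zero_homogenization (hq _)]
    exact Finset.sum_pos' (fun i _ => sq_nonneg _) ⟨i₀, Finset.mem_univ _, by positivity⟩
  by_contra! hlt
  simp [homogeneousComponent_eq_zero _ _ hlt] at hpos

end

/-- With `d` the total degree of `p`: (i) `p` is nonnegative on `ℝⁿ` iff its
homogenization `p̃` is nonnegative on `ℝ^(n+1)`; (ii) `p` is a sum of squares iff `p̃`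
is a sum of squares. -/
theorem homogenization_nonneg_iff_and_sos_iff {n : ℕ} (p : MvPolynomial (Fin n) ℝ) :
    ((∀ v : Fin n → ℝ, 0 ≤ eval v p) ↔
      ∀ w : Fin (n + 1) → ℝ, 0 ≤ eval w (homogenization p.totalDegree p)) ∧
    ((∃ (k : ℕ) (q : Fin k → MvPolynomial (Fin n) ℝ), p = ∑ i, (q i) ^ 2) ↔
      ∃ (k : ℕ) (q : Fin k → MvPolynomial (Fin (n + 1)) ℝ),
        homogenization p.totalDegree p = ∑ i, (q i) ^ 2) := by
  refine ⟨⟨fun hp w => ?_, fun hp v => ?_⟩, ⟨?_, ?_⟩⟩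
  · rcases eq_or_ne p 0 with rfl | hp0
    · simp [homogenization]
    rcases eq_or_ne (w 0) 0 with hw | hw
    · rw [← Fin.cons_self_tail w, hw, eval_cons_zero_homogenization le_rfl]
      exact eval_homogeneousComponent_nonneg_of_nonneg hp le_rfl _
    · rw [eval_homogenization_of_ne_zero le_rfl hw]
      exact mul_nonneg ((even_totalDegree_of_nonneg hp0 hp).pow_nonneg _) (hp _)
  · simpa [eval_cons_one_homogenization] using hp (Fin.cons 1 v)
  · rintro ⟨k, q, rfl⟩
    have hq (i) : (q i).totalDegree ≤ Finset.univ.sup fun i => (q i).totalDegree :=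
      Finset.le_sup (f := fun i => (q i).totalDegree) (Finset.mem_univ i)
    exact ⟨k, _, by rw [totalDegree_sum_sq, homogenization_sum_sq hq]⟩
  · rintro ⟨k, s, hs⟩
    refine ⟨k, fun i => dehomogenize (s i), ?_⟩
    rw [← dehomogenize_homogenization p.totalDegree p, hs, map_sum]
    simp only [map_pow]
end

section
/- Positive semidefinite matrix completion for chordal graphs: let G be a chordal simple graph on the vertex set {1, ..., n} and let A be a real symmetric n×n matrix (a partial matrix whose specified entries are the diagonal entries and the entries indexed by edges of G). Suppose that for every clique K of G, the principal submatrix of A with rows and columns indexed by K is positive semidefinite. Then there exists a positive semidefinite real n×n matrix B with B_{ii} = A_{ii} for all i and B_{ij} = A_{ij} whenever {i,j} is an edge of G; moreover B can be chosen with rank at most ω(G), the clique number of G. -/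
/-- A simple graph is chordal if every cycle of length at least 4 has a chord: an edge
of the graph joining two vertices of the cycle that is not an edge of the cycle. -/
def SimpleGraph.IsChordalGraph {V : Type*} (G : SimpleGraph V) : Prop :=
  ∀ ⦃v : V⦄ (c : G.Walk v v), c.IsCycle → 4 ≤ c.length →
    ∃ x ∈ c.support, ∃ y ∈ c.support, G.Adj x y ∧ s(x, y) ∉ c.edges

/-!
Dirac: in a chordal graph every finite vertex set `s` contains a simplicial vertex. Given
non-adjacent `a, b ∈ s`, let `H` be the component of `b` among the non-neighbours of `a` in `s`,
together with its neighbours in `s`. The border vertices are neighbours of `a`, and two of them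
that were non-adjacent would close, through `a` and a shortest path across the component, a
chordless cycle of length at least `4`; so the border is a clique and induction on `H` yields a
simplicial vertex inside the component, which is then simplicial in `s` as well.

Peeling off a simplicial vertex `v`, realise `A` on the remaining vertices by vectors
`f i ∈ ℝ^ω` with `⟪f i, f j⟫ = A i j` on the diagonal and on edges. The clique formed by `v` and
its neighbours has its own Gram realisation in `ℝ^ω`, and a linear isometry of `ℝ^ω` carrying it
onto `f` along the neighbours of `v` tells where to put `f v`. The Gram matrix of the final
vectors is the completion, and it has rank at most `ω`.
-/

open scoped InnerProductSpace ComplexOrder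
open Matrix Module

section GramMatrix

variable {𝕜 E ι : Type*} [RCLike 𝕜] [NormedAddCommGroup E] [InnerProductSpace 𝕜 E]

theorem norm_linearCombination_eq_of_gram_eq [Fintype ι] {u w : ι → E}
    (h : gram 𝕜 u = gram 𝕜 w) (c : ι → 𝕜) :
    ‖Fintype.linearCombination 𝕜 u c‖ = ‖Fintype.linearCombination 𝕜 w c‖ := by
  have hinner := star_dotProduct_gram_mulVec (𝕜 := 𝕜) u c c
  rw [h, star_dotProduct_gram_mulVec] at hinner
  simp only [Fintype.linearCombination_apply]
  rw [norm_eq_sqrt_re_inner (𝕜 := 𝕜), norm_eq_sqrt_re_inner (𝕜 := 𝕜), hinner]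

theorem exists_linearIsometry_of_gram_eq [FiniteDimensional 𝕜 E] [Fintype ι]
    {u w : ι → E} (h : gram 𝕜 u = gram 𝕜 w) : ∃ T : E →ₗᵢ[𝕜] E, ∀ i, T (u i) = w i := by
  classical
  set φu := Fintype.linearCombination 𝕜 u
  set φw := Fintype.linearCombination 𝕜 w
  have hnorm : ∀ c, ‖φu c‖ = ‖φw c‖ := norm_linearCombination_eq_of_gram_eq h
  obtain ⟨σ, hσ⟩ := φu.rangeRestrict.exists_rightInverse_of_surjective φu.range_rangeRestrict
  have hσu : ∀ x, φu (σ x) = x := fun x => congrArg Subtype.val (LinearMap.congr_fun hσ x)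
  let L : LinearMap.range φu →ₗᵢ[𝕜] E :=
    { toLinearMap := φw ∘ₗ σ
      norm_map' := fun x => by rw [LinearMap.comp_apply, ← hnorm, hσu, Submodule.coe_norm] }
  -- `φu` and `φw` have the same kernel, as their norms agree
  have hL : ∀ c, L.extend (φu c) = φw c := by
    intro c
    rw [show φu c = ((⟨φu c, LinearMap.mem_range_self _ c⟩ : LinearMap.range φu) : E) from
      rfl, L.extend_apply, ← sub_eq_zero]
    change φw (σ _) - φw c = 0
    rw [← map_sub, ← norm_eq_zero, ← hnorm, map_sub, hσu, sub_self, norm_zero]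
  exact ⟨L.extend, fun i => by simpa [φu, φw] using hL (Pi.single i 1)⟩

theorem Matrix.PosSemidef.exists_gram_eq [FiniteDimensional 𝕜 E] [Fintype ι]
    {M : Matrix ι ι 𝕜} (hM : M.PosSemidef) (hcard : Fintype.card ι ≤ finrank 𝕜 E) :
    ∃ g : ι → E, gram 𝕜 g = M := by
  classical
  obtain ⟨B, rfl⟩ : ∃ B : Matrix ι ι 𝕜, M = Bᴴ * B := by
    open scoped MatrixOrder in
    exact CStarAlgebra.nonneg_iff_eq_star_mul_self.mp hM.nonneg
  obtain ⟨ρ⟩ : Nonempty (ι ↪ Fin (finrank 𝕜 E)) := by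
    rwa [Function.Embedding.nonempty_iff_card_le, Fintype.card_fin]
  set e : ι → E := stdOrthonormalBasis 𝕜 E ∘ ρ
  have he : gram 𝕜 e = 1 :=
    gram_eq_one_iff_orthonormal.mpr ((stdOrthonormalBasis 𝕜 E).orthonormal.comp ρ ρ.injective)
  refine ⟨fun k => ∑ i, B i k • e i, Matrix.ext fun k l => ?_⟩
  rw [gram_apply, ← star_dotProduct_gram_mulVec, he, one_mulVec]
  simp [dotProduct, mul_apply]

theorem Matrix.rank_gram_le_finrank [FiniteDimensional 𝕜 E] [Fintype ι] (v : ι → E) :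
    (gram 𝕜 v).rank ≤ finrank 𝕜 E := by
  rw [gram_eq_conjTranspose_mul (stdOrthonormalBasis 𝕜 E), rank_conjTranspose_mul_self]
  exact (rank_le_card_height _).trans_eq (Fintype.card_fin _)

end GramMatrix

namespace SimpleGraph.Walk

variable {V : Type*} {G : SimpleGraph V} {x y : V}

theorem isChordless_of_forall_length_le {S : Set V} {p : G.Walk x y}
    (hpS : ∀ z ∈ p.support, z ∈ S)
    (hmin : ∀ q : G.Walk x y, (∀ z ∈ q.support, z ∈ S) → p.length ≤ q.length) :
    p.IsChordless := by
  classical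
  -- a chord `uw` would give the shorter walk `p.takeUntil u ++ uw ++ p.dropUntil w`
  have idxOf_le : ∀ {u w} (hu : u ∈ p.support) (hw : w ∈ p.support), G.Adj u w →
      p.support.idxOf w ≤ p.support.idxOf u + 1 := by
    intro u w hu hw huw
    have hle := hmin ((p.takeUntil u hu).append (cons huw (p.dropUntil w hw))) fun z hz => by
      simp only [mem_support_append_iff, support_cons, List.mem_cons] at hz
      rcases hz with hz | hz | hz
      · exact hpS z (p.support_takeUntil_subset_support hu hz)
      · exact hz ▸ hpS u hu
      · exact hpS z (p.support_dropUntil_subset_support hw hz)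
    have := List.idxOf_lt_length_of_mem hw
    simp only [length_append, length_cons, length_takeUntil, length_dropUntil, length_support]
      at hle this
    omega
  rw [isChordless_iff_forall_mem_edges]
  intro u w hu hw huw
  have h₁ := idxOf_le hu hw huw
  have h₂ := idxOf_le hw hu huw.symm
  have hu' := List.idxOf_lt_length_of_mem hu
  have hw' := List.idxOf_lt_length_of_mem hw
  rw [length_support] at hu' hw'
  rw [← p.getVert_support_idxOf hu, ← p.getVert_support_idxOf hw] at huw ⊢
  rcases (by omega : p.support.idxOf w = p.support.idxOf u + 1 ∨
      p.support.idxOf u = p.support.idxOf w + 1 ∨ p.support.idxOf u = p.support.idxOf w) with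
    h | h | h
  · rw [h]
    exact p.mk_mem_edges_iff_exists.mpr ⟨_, by omega, rfl⟩
  · rw [h, Sym2.eq_swap]
    exact p.mk_mem_edges_iff_exists.mpr ⟨_, by omega, rfl⟩
  · rw [h] at huw
    exact (G.irrefl huw).elim

theorem exists_isPath_isChordless {S : Set V} (p : G.Walk x y)
    (hpS : ∀ z ∈ p.support, z ∈ S) :
    ∃ q : G.Walk x y, q.IsPath ∧ q.IsChordless ∧ ∀ z ∈ q.support, z ∈ S := by
  classical
  obtain ⟨q, hqS, hmin⟩ := (measure (length : G.Walk x y → ℕ)).wf.has_min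
    {q | ∀ z ∈ q.support, z ∈ S} ⟨p, hpS⟩
  have hbS : ∀ z ∈ q.bypass.support, z ∈ S :=
    fun z hz => hqS z (q.support_bypass_subset_support hz)
  have hb : ∀ r : G.Walk x y, (∀ z ∈ r.support, z ∈ S) → q.bypass.length ≤ r.length :=
    fun r hr => q.length_bypass_le_length.trans (not_lt.mp (hmin r hr))
  exact ⟨q.bypass, q.bypass_isPath, isChordless_of_forall_length_le hbS hb, hbS⟩

end SimpleGraph.Walk

namespace SimpleGraph

variable {V : Type*} {G : SimpleGraph V}

open Walk

theorem IsChordalGraph.adj_of_walk_avoiding_nbhd (hG : G.IsChordalGraph) {a x y : V}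
    (hax : G.Adj a x) (hay : G.Adj a y) (hxy : x ≠ y) (p : G.Walk x y)
    (hp : ∀ z ∈ p.support, z ≠ x → z ≠ y → z ≠ a ∧ ¬G.Adj a z) : G.Adj x y := by
  by_contra hnxy
  obtain ⟨q, hq, hqc, hqS⟩ :=
    p.exists_isPath_isChordless (S := {z | z ≠ x → z ≠ y → z ≠ a ∧ ¬G.Adj a z}) hp
  have ha : a ∉ q.support := fun h => (hqS a h hax.ne hay.ne).1 rfl
  have hlen : 2 ≤ q.length := by
    by_contra! h
    interval_cases hl : q.length
    · exact hxy (q.eq_of_length_eq_zero hl)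
    · exact hnxy (q.adj_of_length_eq_one hl)
  set c := cons hax (q.concat hay.symm)
  have hcycle : c.IsCycle := by
    refine (cons_isCycle_iff _ _).mpr ⟨hq.concat ha _, fun h => ?_⟩
    rw [edges_concat, List.concat_eq_append, List.mem_append, List.mem_singleton] at h
    rcases h with h | h
    · exact ha (q.fst_mem_support_of_mem_edges h)
    · rw [Sym2.eq_iff] at h
      rcases h with ⟨rfl, -⟩ | ⟨-, rfl⟩
      · exact G.irrefl hay
      · exact hxy rfl
  have hsupp : ∀ z, z ∈ c.support ↔ z = a ∨ z ∈ q.support := by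
    intro z; simp [c, support_concat, or_comm]
  have hnbr : ∀ z ∈ q.support, G.Adj a z → s(a, z) ∈ c.edges := by
    intro z hz haz
    by_cases hzx : z = x
    · simp [c, hzx]
    by_cases hzy : z = y
    · simp [c, hzy, edges_concat, Sym2.eq_swap]
    exact absurd haz (hqS z hz hzx hzy).2
  obtain ⟨u, hu, w, hw, huw, hne⟩ := hG c hcycle (by simp [c]; omega)
  rw [hsupp] at hu hw
  rcases hu with rfl | hu <;> rcases hw with rfl | hw
  · exact G.irrefl huw
  · exact hne (hnbr w hw huw)
  · exact hne (Sym2.eq_swap ▸ hnbr u hu huw.symm)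
  · exact hne (by simp [c, hqc.mem_edges hu hw huw])

theorem IsChordalGraph.isClique_of_walks_avoiding_nbhd (hG : G.IsChordalGraph) {a b : V}
    {F Q : Set V} (hF : ∀ z ∈ F, z ≠ a ∧ ¬G.Adj a z) (hQa : ∀ x ∈ Q, G.Adj a x)
    (hQb : ∀ x ∈ Q, ∃ p : G.Walk b x, ∀ z ∈ p.support, z ≠ x → z ∈ F) : G.IsClique Q := by
  intro x hx y hy hxy
  obtain ⟨p, hp⟩ := hQb x hx
  obtain ⟨q, hq⟩ := hQb y hy
  refine hG.adj_of_walk_avoiding_nbhd (hQa x hx) (hQa y hy) hxy (p.reverse.append q)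
    fun z hz hzx hzy => hF z ?_
  rw [mem_support_append_iff, support_reverse, List.mem_reverse] at hz
  exact hz.elim (hp z · hzx) (hq z · hzy)

def IsSimplicialIn (G : SimpleGraph V) (s : Set V) (v : V) : Prop :=
  G.IsClique (s ∩ G.neighborSet v)

theorem IsSimplicialIn.of_subset {s t : Set V} {v : V} (h : G.IsSimplicialIn t v)
    (hst : s ∩ G.neighborSet v ⊆ t) : G.IsSimplicialIn s v :=
  h.subset (Set.subset_inter hst Set.inter_subset_right)

theorem IsSimplicialIn.adj {s : Set V} {v x y : V} (hv : G.IsSimplicialIn s v) (hx : x ∈ s)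
    (hy : y ∈ s) (hvx : G.Adj v x) (hvy : G.Adj v y) (hxy : x ≠ y) : G.Adj x y :=
  hv ⟨hx, hvx⟩ ⟨hy, hvy⟩ hxy

theorem IsClique.isSimplicialIn {s : Set V} (hs : G.IsClique s) (v : V) : G.IsSimplicialIn s v :=
  hs.subset Set.inter_subset_left

def HasSimplicialNonNeighbors (G : SimpleGraph V) (s : Set V) : Prop :=
  ∀ a ∈ s, ∀ b ∈ s, a ≠ b → ¬G.Adj a b → ∃ v ∈ s, v ≠ a ∧ ¬G.Adj a v ∧ G.IsSimplicialIn s v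

theorem HasSimplicialNonNeighbors.exists_isSimplicialIn_notMem {s Q : Set V}
    (hs : G.HasSimplicialNonNeighbors s) (hQ : G.IsClique Q) {b : V} (hb : b ∈ s)
    (hbQ : b ∉ Q) : ∃ v ∈ s, v ∉ Q ∧ G.IsSimplicialIn s v := by
  by_cases hclique : G.IsClique s
  · exact ⟨b, hb, hbQ, hclique.isSimplicialIn b⟩
  obtain ⟨x, hx, y, hy, hxy, hnxy⟩ : ∃ x ∈ s, ∃ y ∈ s, x ≠ y ∧ ¬G.Adj x y := by
    simpa [IsClique, Set.Pairwise] using hclique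
  obtain ⟨v, hv, hvx, hnxv, hvs⟩ := hs x hx y hy hxy hnxy
  obtain ⟨w, hw, hwv, hnvw, hws⟩ := hs v hv x hx hvx (fun h => hnxv h.symm)
  by_cases hvQ : v ∈ Q
  · exact ⟨w, hw, fun hwQ => hnvw (hQ hvQ hwQ hwv.symm), hws⟩
  · exact ⟨v, hv, hvQ, hvs⟩

theorem IsChordalGraph.hasSimplicialNonNeighbors_of_forall_ssubset (hG : G.IsChordalGraph)
    {s : Finset V} (ih : ∀ t ⊂ s, G.HasSimplicialNonNeighbors t) :
    G.HasSimplicialNonNeighbors s := by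
  classical
  intro a ha b hb hab hnab
  set F : Set V := {z | z ∈ s ∧ z ≠ a ∧ ¬G.Adj a z}
  -- `H` is the component of `b` in `F` together with its neighbours in `s`
  set H : Finset V := {x ∈ s | ∃ p : G.Walk b x, ∀ z ∈ p.support, z ≠ x → z ∈ F}
  have hbF : b ∈ F := ⟨hb, hab.symm, hnab⟩
  have hbH : b ∈ H := Finset.mem_filter.mpr ⟨hb, Walk.nil, by simp⟩
  have haH : ¬∃ p : G.Walk b a, ∀ z ∈ p.support, z ≠ a → z ∈ F := by
    rintro ⟨p, hp⟩
    have hadj := p.adj_penultimate (Walk.not_nil_of_ne hab.symm)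
    exact (hp _ (p.getVert_mem_support _) hadj.ne).2.2 hadj.symm
  have hnbrH : ∀ v ∈ H, v ∈ F → ∀ x ∈ s, G.Adj v x → x ∈ H := by
    intro v hv hvF x hx hvx
    obtain ⟨p, hp⟩ := (Finset.mem_filter.mp hv).2
    refine Finset.mem_filter.mpr ⟨hx, p.concat hvx, fun z hz hzx => ?_⟩
    rw [Walk.support_concat, List.mem_append, List.mem_singleton] at hz
    rcases hz with hz | rfl
    · by_cases hzv : z = v
      · exact hzv ▸ hvF
      · exact hp z hz hzv
    · exact absurd rfl hzx
  have hadjH : ∀ x ∈ H, x ∉ F → G.Adj a x := by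
    intro x hx hxF
    have hxa : x ≠ a := fun h => haH (h ▸ (Finset.mem_filter.mp hx).2)
    by_contra hax
    exact hxF ⟨(Finset.mem_filter.mp hx).1, hxa, hax⟩
  have hclique : G.IsClique {x | x ∈ H ∧ x ∉ F} :=
    hG.isClique_of_walks_avoiding_nbhd (fun z hz => hz.2) (fun x hx => hadjH x hx.1 hx.2)
      fun x hx => (Finset.mem_filter.mp hx.1).2
  obtain ⟨v, hvH, hvQ, hv⟩ :=
    (ih H (Finset.filter_ssubset.mpr ⟨a, ha, haH⟩)).exists_isSimplicialIn_notMem hclique hbH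
      fun h => h.2 hbF
  have hvF : v ∈ F := by_contra fun h => hvQ ⟨hvH, h⟩
  exact ⟨v, hvF.1, hvF.2.1, hvF.2.2,
    hv.of_subset fun x ⟨hxs, hvx⟩ => hnbrH v hvH hvF x hxs hvx⟩

theorem IsChordalGraph.hasSimplicialNonNeighbors (hG : G.IsChordalGraph) (s : Finset V) :
    G.HasSimplicialNonNeighbors s := by
  induction s using Finset.strongInduction with
  | H s ih => exact hG.hasSimplicialNonNeighbors_of_forall_ssubset ih

theorem IsChordalGraph.exists_isSimplicialIn (hG : G.IsChordalGraph) {s : Finset V}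
    (hs : s.Nonempty) : ∃ v ∈ s, G.IsSimplicialIn s v := by
  obtain ⟨b, hb⟩ := hs
  obtain ⟨v, hv, -, hvs⟩ :=
    (hG.hasSimplicialNonNeighbors s).exists_isSimplicialIn_notMem isClique_empty hb id
  exact ⟨v, hv, hvs⟩

variable {𝕜 E : Type*} [RCLike 𝕜] [NormedAddCommGroup E] [InnerProductSpace 𝕜 E]
  [FiniteDimensional 𝕜 E] {A : Matrix V V 𝕜}

theorem IsSimplicialIn.exists_inner_eq_of_erase [DecidableEq V]
    (hK : ∀ K : Finset V, G.IsClique (K : Set V) →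
      ∃ g : K → E, gram 𝕜 g = A.submatrix (↑) (↑))
    {s : Finset V} {v : V} (hvs : v ∈ s) (hv : G.IsSimplicialIn s v) {f : V → E}
    (hf : ∀ i ∈ s.erase v, ∀ j ∈ s.erase v, (i = j ∨ G.Adj i j) →
      ⟪f i, f j⟫_𝕜 = A i j) :
    ∃ f' : V → E, ∀ i ∈ s, ∀ j ∈ s, (i = j ∨ G.Adj i j) → ⟪f' i, f' j⟫_𝕜 = A i j := by
  classical
  set N := (s.erase v).filter (G.Adj v)
  have hN : ∀ x ∈ N, x ∈ s.erase v ∧ G.Adj v x := fun x hx => Finset.mem_filter.mp hx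
  have memN : ∀ x ∈ s, (v = x ∨ G.Adj v x) → x ∈ insert v N := by
    rintro x hx (rfl | hvx)
    · exact Finset.mem_insert_self _ _
    · exact Finset.mem_insert_of_mem
        (Finset.mem_filter.mpr ⟨Finset.mem_erase.mpr ⟨hvx.ne', hx⟩, hvx⟩)
  have hNclique : G.IsClique (N : Set V) := fun x hx y hy =>
    hv.adj (Finset.mem_of_mem_erase (hN x hx).1) (Finset.mem_of_mem_erase (hN y hy).1)
      (hN x hx).2 (hN y hy).2
  obtain ⟨g, hg⟩ := hK (insert v N) (by
    rw [Finset.coe_insert, isClique_insert]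
    exact ⟨hNclique, fun x hx _ => (hN x hx).2⟩)
  have hgA : ∀ k l, ⟪g k, g l⟫_𝕜 = A k l := fun k l => congrFun (congrFun hg k) l
  obtain ⟨T, hT⟩ := exists_linearIsometry_of_gram_eq (𝕜 := 𝕜)
    (u := fun k : N => g ⟨k, Finset.mem_insert_of_mem k.2⟩) (w := fun k : N => f k) <|
    Matrix.ext fun k l => by
      rw [gram_apply, gram_apply, hgA]
      exact (hf k (hN k k.2).1 l (hN l l.2).1 ((eq_or_ne _ _).imp_right (hNclique k.2 l.2))).symm
  set f' := Function.update f v (T (g ⟨v, Finset.mem_insert_self _ _⟩))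
  have hf' : ∀ x (hx : x ∈ insert v N), f' x = T (g ⟨x, hx⟩) := by
    intro x hx
    rcases Finset.mem_insert.mp hx with rfl | hxN
    · simp [f']
    · simp only [f', Function.update_of_ne (Finset.ne_of_mem_erase (hN x hxN).1)]
      exact (hT ⟨x, hxN⟩).symm
  refine ⟨f', fun i hi j hj hij => ?_⟩
  by_cases hiv : i = v ∨ j = v
  · have hiN : i ∈ insert v N := memN i hi (by rcases hiv with rfl | rfl <;> tauto)
    have hjN : j ∈ insert v N := memN j hj (by rcases hiv with rfl | rfl <;> tauto)
    rw [hf' i hiN, hf' j hjN, T.inner_map_map, hgA]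
  · push Not at hiv
    simp only [f', Function.update_of_ne hiv.1, Function.update_of_ne hiv.2]
    exact hf i (Finset.mem_erase.mpr ⟨hiv.1, hi⟩) j (Finset.mem_erase.mpr ⟨hiv.2, hj⟩) hij

theorem IsChordalGraph.exists_inner_eq (hG : G.IsChordalGraph)
    (hK : ∀ K : Finset V, G.IsClique (K : Set V) →
      ∃ g : K → E, gram 𝕜 g = A.submatrix (↑) (↑))
    (s : Finset V) :
    ∃ f : V → E, ∀ i ∈ s, ∀ j ∈ s, (i = j ∨ G.Adj i j) → ⟪f i, f j⟫_𝕜 = A i j := by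
  classical
  induction s using Finset.strongInduction with
  | H s ih =>
    rcases s.eq_empty_or_nonempty with rfl | hs
    · exact ⟨0, by simp⟩
    obtain ⟨v, hvs, hv⟩ := hG.exists_isSimplicialIn hs
    obtain ⟨f, hf⟩ := ih _ (Finset.erase_ssubset hvs)
    exact hv.exists_inner_eq_of_erase hK hvs hf

end SimpleGraph

theorem psd_completion_of_chordal_general {n : ℕ} (G : SimpleGraph (Fin n))
    (hchordal : G.IsChordalGraph) (A : Matrix (Fin n) (Fin n) ℝ)
    (hcliques : ∀ K : Finset (Fin n), G.IsClique (K : Set (Fin n)) →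
      (A.submatrix (fun i : K => (i : Fin n)) (fun j : K => (j : Fin n))).PosSemidef) :
    ∃ B : Matrix (Fin n) (Fin n) ℝ, B.PosSemidef ∧
      (∀ i, B i i = A i i) ∧ (∀ i j, G.Adj i j → B i j = A i j) ∧
      B.rank ≤ G.cliqueNum := by
  obtain ⟨f, hf⟩ := hchordal.exists_inner_eq (E := EuclideanSpace ℝ (Fin G.cliqueNum))
    (fun K hK => (hcliques K hK).exists_gram_eq <| by simpa using hK.card_le_cliqueNum) Finset.univ
  refine ⟨gram ℝ f, posSemidef_gram ℝ f, fun i => ?_, fun i j hij => ?_, ?_⟩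
  · exact hf i (Finset.mem_univ i) i (Finset.mem_univ i) (Or.inl rfl)
  · exact hf i (Finset.mem_univ i) j (Finset.mem_univ j) (Or.inr hij)
  · exact (rank_gram_le_finrank (𝕜 := ℝ) f).trans_eq finrank_euclideanSpace_fin

/-- Positive semidefinite matrix completion for chordal graphs (Grone–Johnson–Sá–
Wolkowicz, 'if' direction): if `G` is chordal and every fully specified principal
submatrix (indexed by a clique of `G`) of the partial symmetric matrix `A` is PSD, then
`A` has a PSD completion `B`, which can moreover be chosen of rank at most the clique
number `ω(G)`. -/
theorem psd_completion_of_chordal {n : ℕ} (G : SimpleGraph (Fin n))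
    (hchordal : G.IsChordalGraph) (A : Matrix (Fin n) (Fin n) ℝ) (hA : A.IsSymm)
    (hcliques : ∀ K : Finset (Fin n), G.IsClique (K : Set (Fin n)) →
      (A.submatrix (fun i : K => (i : Fin n)) (fun j : K => (j : Fin n))).PosSemidef) :
    ∃ B : Matrix (Fin n) (Fin n) ℝ, B.PosSemidef ∧
      (∀ i, B i i = A i i) ∧ (∀ i j, G.Adj i j → B i j = A i j) ∧
      B.rank ≤ G.cliqueNum :=
  psd_completion_of_chordal_general G hchordal A hcliques
end

section
/- Failure of positive semidefinite matrix completion for non-chordal graphs: let G be a simple graph on the vertex set {1, ..., n} that is not chordal. Then there exists a real symmetric n×n matrix A such that for every clique K of G the principal submatrix of A indexed by K is positive semidefinite, yet there is no positive semidefinite real n×n matrix B with B_{ii} = A_{ii} for all i and B_{ij} = A_{ij} for every edge {i,j} of G. -/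
open Matrix
open scoped ComplexOrder

theorem Matrix.PosSemidef.apply_eq_apply_of_add_eq_add {n 𝕜 : Type*} [Fintype n] [DecidableEq n]
    [RCLike 𝕜] {B : Matrix n n 𝕜} (hB : B.PosSemidef) {i j : n} (h : B i i + B j j = B i j + B j i)
    (k : n) : B k i = B k j := by
  set x : n → 𝕜 := Pi.single i 1 - Pi.single j 1
  have hBx : B *ᵥ x = fun k => B k i - B k j := by
    ext k; simp [x, mulVec_sub, mulVec_single]
  have hquad : star x ⬝ᵥ B *ᵥ x = 0 := by
    have hx : star x = x := by simp [x, star_sub, Pi.star_single]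
    rw [hx, hBx]
    simp only [x, sub_dotProduct, single_dotProduct, one_mul]
    linear_combination h
  simpa [hBx, sub_eq_zero] using congrFun ((hB.dotProduct_mulVec_zero_iff x).mp hquad) k

theorem Matrix.posSemidef_submatrix_of_apply_eq_zero {ι V : Type*} [Finite V]
    [DecidableEq V] {M : Matrix V V ℝ} (hM : M.IsSymm) (hdiag : ∀ i, M i i = 1) {a b : V}
    (hab : a ≠ b) (hMab : |M a b| ≤ 1) (f : ι → V)
    (hzero : ∀ i j, f i ≠ f j → s(f i, f j) ≠ s(a, b) → M (f i) (f j) = 0) :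
    (M.submatrix f f).PosSemidef := by
  set ε := M a b
  set v : V → ℝ := Pi.single a 1 + Pi.single b ε
  set d : V → ℝ := 1 - Pi.single a 1 - Pi.single b (ε ^ 2)
  have hε : ε ^ 2 ≤ 1 := by nlinarith [abs_nonneg ε, sq_abs ε]
  have hd : ∀ x, 0 ≤ d x := by
    intro x
    by_cases hxa : x = a <;> by_cases hxb : x = b <;> simp [d, hxa, hxb, hab, hε]
  have hB : (diagonal d + vecMulVec v v).PosSemidef :=
    (PosSemidef.diagonal hd).add (by simpa using posSemidef_vecMulVec_self_star v)
  have hba : M b a = ε := by simpa using congrFun (congrFun hM a) b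
  convert hB.submatrix f using 1
  ext i j
  simp only [submatrix_apply, add_apply, diagonal_apply, vecMulVec_apply]
  by_cases hij : f i = f j
  · rw [hij, hdiag]
    by_cases hja : f j = a <;> by_cases hjb : f j = b <;> simp [d, v, hja, hjb, hab, Ne.symm hab]
    ring
  by_cases hpair : s(f i, f j) = s(a, b)
  · rcases Sym2.eq_iff.mp hpair with ⟨hia, hjb⟩ | ⟨hib, hja⟩
    · simp [hia, hjb, v, hab, Ne.symm hab]; rfl
    · simp [hib, hja, hba, v, hab, Ne.symm hab]
  · have hv : v (f i) * v (f j) = 0 := by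
      by_cases hia : f i = a <;> by_cases hib : f i = b <;> by_cases hja : f j = a <;>
        by_cases hjb : f j = b <;> simp_all [v, Ne.symm hab]
    rw [hzero i j hij hpair, if_neg hij, hv, add_zero]

namespace SimpleGraph.Walk

variable {V : Type*} {G : SimpleGraph V} {u : V}

theorem IsCycle.not_toSubgraph_adj_snd_penultimate {c : G.Walk u u} (hc : c.IsCycle)
    (hlen : 4 ≤ c.length) : ¬ c.toSubgraph.Adj c.snd c.penultimate := by
  intro h
  have hnbr : c.penultimate ∈ c.toSubgraph.neighborSet (c.getVert 1) := h
  rw [hc.neighborSet_toSubgraph_internal one_ne_zero (by omega)] at hnbr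
  rcases hnbr with hu | h2
  · rw [Nat.sub_self, getVert_zero, penultimate, hc.getVert_endpoint_iff (by omega)] at hu
    omega
  · have := hc.getVert_injOn (by simp; omega) (by simp; omega) h2
    omega

theorem IsCycle.not_toSubgraph_adj_of_adj_of_adj {c : G.Walk u u} (hc : c.IsCycle)
    (hlen : 4 ≤ c.length) {a b d : V} (hab : c.toSubgraph.Adj a b)
    (had : c.toSubgraph.Adj a d) : ¬ c.toSubgraph.Adj b d := by
  classical
  intro hbd
  have ha : a ∈ c.support := c.mem_support_of_adj_toSubgraph hab
  have hc' := hc.rotate ha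
  have hnbr : ∀ x, c.toSubgraph.Adj a x →
      x = (c.rotate a ha).snd ∨ x = (c.rotate a ha).penultimate := by
    intro x hx
    have : x ∈ (c.rotate a ha).toSubgraph.neighborSet a := by rwa [toSubgraph_rotate]
    rwa [hc'.neighborSet_toSubgraph_endpoint] at this
  have key := hc'.not_toSubgraph_adj_snd_penultimate (by simpa using hlen)
  rw [toSubgraph_rotate] at key
  rcases hnbr b hab with rfl | rfl <;> rcases hnbr d had with rfl | rfl
  · exact hbd.ne rfl
  · exact key hbd
  · exact key hbd.symm
  · exact hbd.ne rfl

theorem eq_of_forall_mem_edges {α : Type*} (f : V → α) {v : V} (p : G.Walk u v)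
    (h : ∀ x y, s(x, y) ∈ p.edges → f x = f y) : f u = f v := by
  induction p with
  | nil => rfl
  | cons _ p ih => exact (h _ _ (by simp)).trans (ih fun x y hxy => h x y (by simp [hxy]))

theorem IsChordless.eq_or_eq_of_isClique {c : G.Walk u u} (hcl : c.IsChordless)
    (hc : c.IsCycle) (hlen : 4 ≤ c.length) {K : Set V} (hK : G.IsClique K) {a b x : V}
    (ha : a ∈ K) (hb : b ∈ K) (hab : c.toSubgraph.Adj a b) (hx : x ∈ K) (hxc : x ∈ c.support) :
    x = a ∨ x = b := by
  by_contra! hne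
  have hxa := hcl.mem_edges hxc (c.mem_support_of_adj_toSubgraph hab) (hK hx ha hne.1)
  have hxb := hcl.mem_edges hxc (c.mem_support_of_adj_toSubgraph hab.symm) (hK hx hb hne.2)
  rw [← adj_toSubgraph_iff_mem_edges] at hxa hxb
  exact hc.not_toSubgraph_adj_of_adj_of_adj hlen hxa hxb hab

variable [DecidableEq V]

def cycleMatrix (c : G.Walk u u) : Matrix V V ℝ :=
  Matrix.of fun i j =>
    if i = j then 1 else if s(i, j) = s(u, c.snd) then -1 else if s(i, j) ∈ c.edges then 1 else 0

@[simp]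
theorem cycleMatrix_apply_self (c : G.Walk u u) (i : V) : c.cycleMatrix i i = 1 := by
  simp [cycleMatrix]

theorem cycleMatrix_isSymm (c : G.Walk u u) : c.cycleMatrix.IsSymm := by
  ext i j
  simp only [cycleMatrix, Matrix.transpose_apply, Matrix.of_apply, Sym2.eq_swap (a := j),
    eq_comm (a := j)]

theorem abs_cycleMatrix_apply_le_one (c : G.Walk u u) (i j : V) : |c.cycleMatrix i j| ≤ 1 := by
  simp only [cycleMatrix, Matrix.of_apply]
  split_ifs <;> norm_num

theorem cycleMatrix_apply_of_notMem_edges {c : G.Walk u u} (hc : ¬ c.Nil) {i j : V}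
    (hij : i ≠ j) (h : s(i, j) ∉ c.edges) : c.cycleMatrix i j = 0 := by
  have hsnd : s(u, c.snd) ∈ c.edges := adj_toSubgraph_iff_mem_edges.mp (c.toSubgraph_adj_snd hc)
  have : s(i, j) ≠ s(u, c.snd) := fun he => h (he ▸ hsnd)
  simp only [cycleMatrix, Matrix.of_apply, if_neg hij, if_neg this, if_neg h]

theorem IsChordless.posSemidef_submatrix_cycleMatrix [Finite V] {c : G.Walk u u}
    (hcl : c.IsChordless) (hc : c.IsCycle) (hlen : 4 ≤ c.length) {K : Set V}
    (hK : G.IsClique K) : (c.cycleMatrix.submatrix ((↑) : K → V) (↑)).PosSemidef := by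
  by_cases hedge : ∃ a ∈ K, ∃ b ∈ K, c.toSubgraph.Adj a b
  · obtain ⟨a, ha, b, hb, hab⟩ := hedge
    refine Matrix.posSemidef_submatrix_of_apply_eq_zero c.cycleMatrix_isSymm
      (cycleMatrix_apply_self c) hab.ne (abs_cycleMatrix_apply_le_one c a b) _ ?_
    intro x y hxy hne
    refine cycleMatrix_apply_of_notMem_edges hc.not_nil hxy fun hmem => hne ?_
    have hxy' := adj_toSubgraph_iff_mem_edges.mpr hmem
    have hx := hcl.eq_or_eq_of_isClique hc hlen hK ha hb hab x.2
      (c.mem_support_of_adj_toSubgraph hxy')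
    have hy := hcl.eq_or_eq_of_isClique hc hlen hK ha hb hab y.2
      (c.mem_support_of_adj_toSubgraph hxy'.symm)
    rcases hx with hx | hx <;> rcases hy with hy | hy <;> simp_all [Sym2.eq_swap]
  · push Not at hedge
    refine Matrix.posSemidef_submatrix_of_apply_eq_zero c.cycleMatrix_isSymm
      (cycleMatrix_apply_self c) (c.adj_snd hc.not_nil).ne
      (abs_cycleMatrix_apply_le_one c u c.snd) _ fun x y hxy _ => ?_
    exact cycleMatrix_apply_of_notMem_edges hc.not_nil hxy fun hmem =>
      hedge x x.2 y y.2 (adj_toSubgraph_iff_mem_edges.mpr hmem)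

theorem IsCycle.not_posSemidef_of_eqOn_cycleMatrix [Fintype V] {c : G.Walk u u}
    (hc : c.IsCycle) {B : Matrix V V ℝ} (hdiag : ∀ i, B i i = c.cycleMatrix i i)
    (hedge : ∀ i j, s(i, j) ∈ c.edges → B i j = c.cycleMatrix i j) : ¬ B.PosSemidef := by
  intro hB
  cases c with
  | nil => exact hc.not_nil Nil.nil
  | @cons _ w _ h p =>
    have hclosing : s(u, w) ∉ p.edges := ((cons_isCycle_iff p h).mp hc).2
    have hcol : ∀ x y, s(x, y) ∈ p.edges → Bᵀ x = Bᵀ y := by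
      intro x y hxy
      have hxy' : x ≠ y := (p.adj_of_mem_edges hxy).ne
      have hne : s(x, y) ≠ s(u, (cons h p).snd) := fun he =>
        hclosing (by rwa [he, snd_cons] at hxy)
      have hmem : s(x, y) ∈ (cons h p).edges := List.mem_cons_of_mem _ hxy
      have hone : (cons h p).cycleMatrix x y = 1 := by
        simp only [cycleMatrix, Matrix.of_apply, if_neg hxy', if_neg hne, if_pos hmem]
      have hBxy : B x y = 1 := (hedge x y hmem).trans hone
      have hByx : B y x = 1 := by
        rw [hedge y x (Sym2.eq_swap ▸ hmem), (cycleMatrix_isSymm _).apply, hone]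
      funext k
      refine hB.apply_eq_apply_of_add_eq_add ?_ k
      rw [hdiag, hdiag, hBxy, hByx]
      simp
    have hwu : (cons h p).cycleMatrix w u = -1 := by
      simp only [cycleMatrix, Matrix.of_apply, if_neg h.ne', snd_cons, Sym2.eq_swap, if_pos]
    have := congrFun (p.eq_of_forall_mem_edges _ hcol) w
    rw [transpose_apply, transpose_apply, hdiag, hedge w u (by simp [Sym2.eq_swap]), hwu,
      cycleMatrix_apply_self] at this
    norm_num at this

end SimpleGraph.Walk

theorem SimpleGraph.exists_isCycle_isChordless_of_not_isChordalGraph {V : Type*}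
    {G : SimpleGraph V} (h : ¬ G.IsChordalGraph) :
    ∃ (u : V) (c : G.Walk u u), c.IsCycle ∧ 4 ≤ c.length ∧ c.IsChordless := by
  simp only [IsChordalGraph, not_forall, not_exists, not_and, not_not] at h
  obtain ⟨u, c, hc, hlen, hcl⟩ := h
  exact ⟨u, c, hc, hlen, Walk.isChordless_iff_forall_mem_edges.mpr fun x y hx hy => hcl x hx y hy⟩

/-- Failure of PSD completion for non-chordal graphs (Grone–Johnson–Sá–Wolkowicz,
'only if' direction): if `G` is not chordal, there is a partial symmetric matrix `A`
all of whose fully specified principal submatrices (indexed by cliques of `G`) are PSD,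
but which admits no PSD completion. -/
theorem exists_noncompletable_of_not_chordal {n : ℕ} (G : SimpleGraph (Fin n))
    (hnot : ¬ G.IsChordalGraph) :
    ∃ A : Matrix (Fin n) (Fin n) ℝ, A.IsSymm ∧
      (∀ K : Finset (Fin n), G.IsClique (K : Set (Fin n)) →
        (A.submatrix (fun i : K => (i : Fin n)) (fun j : K => (j : Fin n))).PosSemidef) ∧
      ¬ ∃ B : Matrix (Fin n) (Fin n) ℝ, B.PosSemidef ∧
        (∀ i, B i i = A i i) ∧ (∀ i j, G.Adj i j → B i j = A i j) := by
  obtain ⟨u, c, hc, hlen, hcl⟩ := G.exists_isCycle_isChordless_of_not_isChordalGraph hnot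
  refine ⟨c.cycleMatrix, c.cycleMatrix_isSymm,
    fun K hK => hcl.posSemidef_submatrix_cycleMatrix hc hlen hK, ?_⟩
  rintro ⟨B, hB, hdiag, hadj⟩
  exact hc.not_posSemidef_of_eqOn_cycleMatrix hdiag
    (fun i j hij => hadj i j (c.adj_of_mem_edges hij)) hB
end
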